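/- arXiv:2204.00199 — 8 statements merged into one kernel-verified Lean document; each statement's English description precedes it below -/
import Mathlib

section
/- Let 1→2→⋯→m→1 be an m-vertex directed cycle (m ≥ 2), where for each i ∈ {1,…,m} the arc (i−1,i) carries a real matrix C_i with n columns (indices mod m, x_0 := x_m), and let K_i = kernel(C_i). Then the relations C_i(x_i − x_{i−1}) = 0 for all i ∈ {1,…,m} imply x_1 = x_2 = ⋯ = x_m for every choice of x_1,…,x_m ∈ ℝ^n if and only if {K_1, K_2, …, K_m} is an independent family of subspaces of ℝ^n. -/
/-!
Writing `d i = x i - x (i - 1)`, the increments of any `x` around the cycle sum to zero, and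
conversely every family summing to zero is the increment family of its partial sums. The
relations say exactly `d i ∈ ker C_i`, and `x` is constant iff all `d i` vanish. So the cycle is
well-configured iff the only zero-sum family with `d i ∈ ker C_i` is zero, which is independence
of the kernels.
-/

def IndepFamily {ι V : Type*} [AddCommGroup V] [Module ℝ V] (S : ι → Submodule ℝ V) : Prop :=
  ∀ i : ι, S i ⊓ (⨆ j ∈ ({i}ᶜ : Set ι), S j) = ⊥

theorem indepFamily_iff_iSupIndep {ι V : Type*} [AddCommGroup V] [Module ℝ V]
    (S : ι → Submodule ℝ V) : IndepFamily S ↔ iSupIndep S :=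
  forall_congr' fun _ => disjoint_iff.symm

theorem iSupIndep_iff_forall_sum_eq_zero {ι R N : Type*} [Fintype ι] [Ring R] [AddCommGroup N]
    [Module R N] (p : ι → Submodule R N) :
    iSupIndep p ↔ ∀ v : ι → N, (∀ i, v i ∈ p i) → ∑ i, v i = 0 → v = 0 := by
  classical
  rw [iSupIndep_iff_finsetSum_eq_zero_imp_eq_zero]
  refine ⟨fun h v hv hsum => funext fun i => h Finset.univ v (fun i _ => hv i) hsum i
    (Finset.mem_univ i), fun h s v hv hsum i hi => ?_⟩
  have hext := h (fun j => if j ∈ s then v j else 0)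
    (fun j => by split_ifs with hj; exacts [hv j hj, zero_mem _])
    (by rw [Finset.sum_ite_mem, Finset.univ_inter, hsum])
  simpa [hi] using congrFun hext i

namespace Fin

variable {m : ℕ} {V : Type*} [AddCommGroup V]

theorem succ_sub_one_eq_castSucc (j : Fin m) : j.succ - 1 = j.castSucc := by
  rw [← coeSucc_eq_succ, add_sub_cancel_right]

theorem partialSum_last (f : Fin m → V) : partialSum f (last m) = ∑ i, f i := by
  rw [partialSum, val_last, List.take_of_length_le (by simp), List.sum_ofFn]

theorem sum_sub_sub_one [NeZero m] (x : Fin m → V) : ∑ i, (x i - x (i - 1)) = 0 := by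
  rw [Finset.sum_sub_distrib, sub_eq_zero]
  exact ((Equiv.subRight 1).sum_comp x).symm

theorem eq_of_forall_eq_sub_one {α : Type*} [NeZero m] {x : Fin m → α}
    (h : ∀ i, x i = x (i - 1)) (i j : Fin m) : x i = x j := by
  obtain ⟨m, rfl⟩ := Nat.exists_eq_succ_of_ne_zero (NeZero.ne m)
  suffices hx0 : ∀ i, x i = x 0 by rw [hx0 i, hx0 j]
  refine fun i => i.induction rfl fun i hi => ?_
  rw [h i.succ, succ_sub_one_eq_castSucc, hi]

theorem exists_sub_sub_one_eq [NeZero m] (d : Fin m → V) (hd : ∑ i, d i = 0) :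
    ∃ x : Fin m → V, ∀ i, x i - x (i - 1) = d i := by
  obtain ⟨m, rfl⟩ := Nat.exists_eq_succ_of_ne_zero (NeZero.ne m)
  refine ⟨fun i => partialSum d i.succ, fun i => ?_⟩
  dsimp only
  cases i using Fin.cases with
  | zero =>
    have hlast : (0 : Fin (m + 1)) - 1 = last m := by rw [sub_eq_iff_eq_add, last_add_one]
    rw [hlast, succ_last, partialSum_last, hd, sub_zero, partialSum_succ, castSucc_zero,
      partialSum_zero, zero_add]
  | succ j =>
    rw [succ_sub_one_eq_castSucc, succ_castSucc, partialSum_succ, add_sub_cancel_left]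

end Fin

def CycleWellConfigured {m : ℕ} [NeZero m] {R V : Type*} [Ring R] [AddCommGroup V] [Module R V]
    (K : Fin m → Submodule R V) : Prop :=
  ∀ x : Fin m → V, (∀ i, x i - x (i - 1) ∈ K i) → ∀ i j, x i = x j

theorem cycleWellConfigured_iff_iSupIndep {m : ℕ} [NeZero m] {R V : Type*} [Ring R]
    [AddCommGroup V] [Module R V] (K : Fin m → Submodule R V) :
    CycleWellConfigured K ↔ iSupIndep K := by
  rw [iSupIndep_iff_forall_sum_eq_zero]
  constructor
  · intro hwc d hdK hsum
    obtain ⟨x, hx⟩ := Fin.exists_sub_sub_one_eq d hsum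
    funext i
    rw [← hx i, hwc x (fun j => hx j ▸ hdK j) i (i - 1), sub_self, Pi.zero_apply]
  · intro hind x hxK
    have hdiff := hind _ hxK (Fin.sum_sub_sub_one x)
    exact Fin.eq_of_forall_eq_sub_one fun i => sub_eq_zero.mp (congrFun hdiff i)

theorem stmt_1_general (m n : ℕ) [NeZero m] (k : Fin m → ℕ)
    (C : (i : Fin m) → Matrix (Fin (k i)) (Fin n) ℝ) :
    (∀ x : Fin m → (Fin n → ℝ),
        (∀ i : Fin m, (C i).mulVec (x i - x (i - 1)) = 0) → ∀ i j, x i = x j)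
      ↔ IndepFamily (fun i : Fin m => LinearMap.ker (C i).mulVecLin) := by
  rw [indepFamily_iff_iSupIndep, ← cycleWellConfigured_iff_iSupIndep]
  rfl

/-- The weighted directed cycle `0 → 1 → ⋯ → m-1 → 0` (matrix `C i` on the
arc `(i-1, i)`, indices mod `m`) is well-configured iff the kernels `K i = ker (C i)` form
an independent family. -/
theorem stmt_1 (m n : ℕ) [NeZero m] (hm : 2 ≤ m) (k : Fin m → ℕ)
    (C : (i : Fin m) → Matrix (Fin (k i)) (Fin n) ℝ) :
    (∀ x : Fin m → (Fin n → ℝ),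
        (∀ i : Fin m, (C i).mulVec (x i - x (i - 1)) = 0) → ∀ i j, x i = x j)
      ↔ IndepFamily (fun i : Fin m => LinearMap.ker (C i).mulVecLin) :=
  stmt_1_general m n k C
end

section
/- Let 1→2→⋯→m be an m-vertex directed path (m ≥ 2) with real matrices C_2,…,C_m with n columns on the arcs and K_i = kernel(C_i). Then: (a) for all x_1,…,x_m ∈ ℝ^n satisfying x_1 = x_m, the relations C_i(x_i − x_{i−1}) = 0 for i = 2,…,m imply x_1 = x_2 = ⋯ = x_m, if and only if {K_2,…,K_m} is an independent family of subspaces of ℝ^n; (b) consequently, there exist such matrices C_2,…,C_m with all K_i ≠ {0} making this implication hold if and only if m − 1 ≤ n. -/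
namespace Fin

variable {p : ℕ}

theorem succ_sub_one (j : Fin p) : (j.succ - 1 : Fin (p + 1)) = j.castSucc :=
  (eq_sub_of_add_eq coeSucc_eq_succ).symm

theorem partialSum_last_s3 {M : Type*} [AddCommMonoid M] (v : Fin p → M) :
    partialSum v (last p) = ∑ j, v j := by
  rw [partialSum, val_last, List.take_of_length_le (by simp), List.sum_ofFn]

theorem sum_neg_castSucc_add_succ {G : Type*} [AddCommGroup G] (x : Fin (p + 1) → G) :
    ∑ j : Fin p, (-x j.castSucc + x j.succ) = -x 0 + x (last p) := by
  have h := congrFun (partialSum_left_neg x) (last p)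
  rw [Pi.vadd_apply, vadd_eq_add] at h
  rw [← partialSum_last_s3, eq_neg_add_iff_add_eq, h]

end Fin

theorem iSupIndep_comp_equiv_iff {ι κ α : Type*} [CompleteLattice α] (e : κ ≃ ι) (t : ι → α) :
    iSupIndep (t ∘ e) ↔ iSupIndep t :=
  ⟨fun h ↦ by simpa [Function.comp_assoc] using h.comp e.symm.injective, fun h ↦ h.comp e.injective⟩

section Independence

variable {ι R V : Type*} [Ring R] [AddCommGroup V] [Module R V]

theorem iSupIndep_iff_sum_eq_zero_imp_eq_zero [Fintype ι] (K : ι → Submodule R V) :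
    iSupIndep K ↔ ∀ v : ι → V, (∀ i, v i ∈ K i) → ∑ i, v i = 0 → v = 0 := by
  classical
  rw [iSupIndep_iff_finsetSum_eq_zero_imp_eq_zero]
  refine ⟨fun h v hv hsum ↦ funext fun i ↦ h _ v (fun i _ ↦ hv i) hsum i (Finset.mem_univ i),
    fun h s v hv hsum i hi ↦ ?_⟩
  have hvs := congrFun (h (fun j ↦ if j ∈ s then v j else 0)
    (fun j ↦ by split_ifs with hj; exacts [hv j hj, zero_mem _])
    (by rwa [Finset.sum_ite_mem, Finset.univ_inter])) i
  simpa [hi] using hvs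

theorem forall_eq_of_closed_walk_iff_iSupIndep {p : ℕ} (K : Fin p → Submodule R V) :
    (∀ x : Fin (p + 1) → V, x 0 = x (Fin.last p) →
        (∀ j, x j.succ - x j.castSucc ∈ K j) → ∀ i j, x i = x j) ↔ iSupIndep K := by
  rw [iSupIndep_iff_sum_eq_zero_imp_eq_zero]
  constructor
  · intro h v hv hsum
    have hstep : ∀ j, Fin.partialSum v j.succ - Fin.partialSum v j.castSucc = v j := fun j ↦ by
      rw [sub_eq_neg_add, Fin.partialSum_right_neg]
    have hconst := h (Fin.partialSum v) (by rw [Fin.partialSum_zero, Fin.partialSum_last_s3, hsum])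
      (fun j ↦ hstep j ▸ hv j)
    funext j
    rw [← hstep j, hconst j.succ j.castSucc, sub_self, Pi.zero_apply]
  · intro h x hclosed hx
    have hsteps := h (fun j ↦ -x j.castSucc + x j.succ) (fun j ↦ by rw [neg_add_eq_sub]; exact hx j)
      (by rw [Fin.sum_neg_castSucc_add_succ, hclosed, neg_add_cancel])
    have hx0 : ∀ i, x i = x 0 := Fin.induction rfl fun j hj ↦
      (neg_add_eq_zero.mp (congrFun hsteps j)).symm.trans hj
    exact fun i j ↦ (hx0 i).trans (hx0 j).symm

theorem forall_eq_of_closed_path_iff_iSupIndep {m : ℕ} [NeZero m] (K : Fin m → Submodule R V) :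
    (∀ x : Fin m → V, x 0 = x ⟨m - 1, Nat.sub_one_lt (NeZero.ne m)⟩ →
        (∀ i, i ≠ 0 → x i - x (i - 1) ∈ K i) → ∀ i j, x i = x j) ↔
      iSupIndep fun i : {i : Fin m // i ≠ 0} ↦ K i := by
  obtain ⟨p, rfl⟩ : ∃ p, m = p + 1 := ⟨m - 1, (Nat.succ_pred_eq_of_ne_zero (NeZero.ne m)).symm⟩
  rw [← iSupIndep_comp_equiv_iff (finSuccAboveEquiv 0), ← forall_eq_of_closed_walk_iff_iSupIndep]
  simp only [Fin.forall_fin_succ (P := fun i ↦ i ≠ 0 → _), ne_eq, not_true_eq_false,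
    false_imp_iff, Fin.succ_ne_zero, not_false_eq_true, true_imp_iff, Fin.succ_sub_one, true_and,
    Function.comp_apply, finSuccAboveEquiv_apply, Fin.succAbove_zero]
  rfl

theorem forall_eq_of_mulVec_sub_eq_zero_iff_iSupIndep_ker {R ι : Type*} [CommRing R] [Fintype ι]
    {m : ℕ} [NeZero m] {κ : Fin m → Type*} (C : (i : Fin m) → Matrix (κ i) ι R) :
    (∀ x : Fin m → (ι → R), x 0 = x ⟨m - 1, Nat.sub_one_lt (NeZero.ne m)⟩ →
        (∀ i, i ≠ 0 → (C i).mulVec (x i - x (i - 1)) = 0) → ∀ i j, x i = x j) ↔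
      iSupIndep fun i : {i : Fin m // i ≠ 0} ↦ LinearMap.ker (C i.1).mulVecLin := by
  rw [← forall_eq_of_closed_path_iff_iSupIndep fun i ↦ LinearMap.ker (C i).mulVecLin]
  simp only [LinearMap.mem_ker, Matrix.mulVecLin_apply]

end Independence

theorem Submodule.exists_matrix_ker_eq {𝕜 n : Type*} [Field 𝕜] [Fintype n] [DecidableEq n]
    (K : Submodule 𝕜 (n → 𝕜)) :
    ∃ (k : ℕ) (C : Matrix (Fin k) n 𝕜), LinearMap.ker C.mulVecLin = K := by
  let f := (Module.finBasis 𝕜 ((n → 𝕜) ⧸ K)).equivFun.toLinearMap ∘ₗ K.mkQ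
  refine ⟨_, LinearMap.toMatrix' f, ?_⟩
  rw [← Matrix.toLin'_apply', Matrix.toLin'_toMatrix', LinearEquiv.ker_comp, Submodule.ker_mkQ]

theorem exists_iSupIndep_ne_bot_iff_card_le_finrank {ι 𝕜 V : Type*} [Fintype ι] [DivisionRing 𝕜]
    [AddCommGroup V] [Module 𝕜 V] [FiniteDimensional 𝕜 V] :
    (∃ K : ι → Submodule 𝕜 V, (∀ i, K i ≠ ⊥) ∧ iSupIndep K) ↔
      Fintype.card ι ≤ Module.finrank 𝕜 V := by
  constructor
  · rintro ⟨K, hne, hK⟩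
    simpa [Fintype.card_congr (Equiv.subtypeUnivEquiv hne)] using hK.subtype_ne_bot_le_finrank
  · intro h
    obtain ⟨f⟩ := Function.Embedding.nonempty_of_card_le (h.trans_eq (Fintype.card_fin _).symm)
    let b := Module.finBasis 𝕜 V
    exact ⟨fun i ↦ 𝕜 ∙ b (f i), fun i ↦ by simpa using b.ne_zero (f i),
      (b.linearIndependent.comp f f.injective).iSupIndep_span_singleton⟩

/-- For the directed path `0 → 1 → ⋯ → m-1` (matrix `C i` on arc `(i-1, i)` for
`i ≠ 0`) with the end-vertex constraint `x 0 = x (m-1)`: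
(a) local agreement implies consensus iff `{ker (C i) : i ≠ 0}` is an independent family;
(b) there exist such matrices with all kernels nonzero making this hold iff `m - 1 ≤ n`. -/
theorem stmt_3 (m n : ℕ) [NeZero m] (hm : 2 ≤ m) (k : Fin m → ℕ)
    (C : (i : Fin m) → Matrix (Fin (k i)) (Fin n) ℝ) :
    ((∀ x : Fin m → (Fin n → ℝ),
        x 0 = x ⟨m - 1, by omega⟩ →
        (∀ i : Fin m, i ≠ 0 → (C i).mulVec (x i - x (i - 1)) = 0) → ∀ i j, x i = x j)
      ↔ IndepFamily (fun i : {i : Fin m // i ≠ 0} => LinearMap.ker (C i.1).mulVecLin)) ∧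
    ((∃ (k' : Fin m → ℕ) (C' : (i : Fin m) → Matrix (Fin (k' i)) (Fin n) ℝ),
        (∀ i : Fin m, i ≠ 0 → LinearMap.ker (C' i).mulVecLin ≠ ⊥) ∧
        ∀ x : Fin m → (Fin n → ℝ),
          x 0 = x ⟨m - 1, by omega⟩ →
          (∀ i : Fin m, i ≠ 0 → (C' i).mulVec (x i - x (i - 1)) = 0) → ∀ i j, x i = x j)
      ↔ m - 1 ≤ n) := by
  refine ⟨(forall_eq_of_mulVec_sub_eq_zero_iff_iSupIndep_ker C).trans (indepFamily_iff_iSupIndep _).symm, ?_⟩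
  simp_rw [forall_eq_of_mulVec_sub_eq_zero_iff_iSupIndep_ker]
  refine Iff.trans ?_ ((exists_iSupIndep_ne_bot_iff_card_le_finrank
    (ι := {i : Fin m // i ≠ 0}) (𝕜 := ℝ) (V := Fin n → ℝ)).trans (by simp))
  constructor
  · rintro ⟨k', C', hne, hind⟩
    exact ⟨_, fun i ↦ hne i.1 i.2, hind⟩
  · rintro ⟨K, hne, hind⟩
    choose k' C' hC' using fun i : Fin m ↦
      Submodule.exists_matrix_ker_eq (if h : i = 0 then ⊥ else K ⟨i, h⟩)
    refine ⟨k', C', fun i hi ↦ by simpa [hC', hi] using hne ⟨i, hi⟩, ?_⟩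
    convert hind with i
    simp [hC', i.2]
end

section
/- Let N be a strongly connected directed graph without self-arcs on vertices {1,…,m}, m ≥ 2, where each arc (j,i) carries a real matrix C_{ji} with n columns, and let D = {E_0, E_1, …, E_p} be an ear decomposition of N. If for each ear E ∈ D the family {kernel(C_{ji}) : (j,i) is an arc of E} is an independent family of subspaces of ℝ^n, then the weighted graph is well-configured: whenever x_1,…,x_m ∈ ℝ^n satisfy C_{ji}x_j = C_{ji}x_i for every arc (j,i) of N, it follows that x_1 = x_2 = ⋯ = x_m. -/
/-- The set of vertices touched by a set of arcs. -/
def arcVerts {V : Type*} (E : Set (V × V)) : Set V :=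
  {v | (∃ w, (v, w) ∈ E) ∨ (∃ w, (w, v) ∈ E)}

/-- `E` is (the arc set of) a directed cycle: there is an injective cyclic enumeration
`v : Fin ℓ → V` (`ℓ ≥ 2`) with `E = {(v i, v (i+1)) : i}` (indices mod `ℓ`). -/
def IsDirectedCycleOn {V : Type*} (E : Set (V × V)) : Prop :=
  ∃ ℓ : ℕ, ∃ hℓ : 2 ≤ ℓ, ∃ v : Fin ℓ → V, Function.Injective v ∧
    E = {p | ∃ i : Fin ℓ, p = (v i, v (i + ⟨1, by omega⟩))}

/-- `E` is (the arc set of) a directed path from `a` to `b`: there is an injective enumeration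
`v : Fin (ℓ+1) → V` (`ℓ ≥ 1`) with `v 0 = a`, `v ℓ = b` and `E = {(v i, v (i+1)) : i < ℓ}`. -/
def IsDirectedPathFrom {V : Type*} (E : Set (V × V)) (a b : V) : Prop :=
  ∃ ℓ : ℕ, 1 ≤ ℓ ∧ ∃ v : Fin (ℓ + 1) → V, Function.Injective v ∧
    v 0 = a ∧ v (Fin.last ℓ) = b ∧
    E = {p | ∃ i : Fin ℓ, p = (v i.castSucc, v i.succ)}

/- ------------------ auxiliary lemmas ------------------ -/

lemma indep_zero {ι V : Type*} [AddCommGroup V] [Module ℝ V] (S : ι → Submodule ℝ V)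
    (hS : IndepFamily S) {ℓ : ℕ} (f : Fin ℓ → ι) (hf : Function.Injective f)
    (d : Fin ℓ → V) (hd : ∀ i, d i ∈ S (f i)) (hsum : ∑ i, d i = 0) (i₀ : Fin ℓ) :
    d i₀ = 0 := by
  have h1 : d i₀ + ∑ i ∈ Finset.univ.erase i₀, d i = 0 := by
    rwa [Finset.add_sum_erase Finset.univ d (Finset.mem_univ i₀)]
  have h2 : d i₀ = - ∑ i ∈ Finset.univ.erase i₀, d i := eq_neg_of_add_eq_zero_left h1
  have h3 : (∑ i ∈ Finset.univ.erase i₀, d i) ∈ ⨆ j ∈ ({f i₀}ᶜ : Set ι), S j := by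
    apply Submodule.sum_mem
    intro i hi
    have hne : f i ≠ f i₀ := fun h => (Finset.mem_erase.1 hi).1 (hf h)
    exact Submodule.mem_iSup_of_mem (f i) (Submodule.mem_iSup_of_mem hne (hd i))
  have h4 : d i₀ ∈ S (f i₀) ⊓ (⨆ j ∈ ({f i₀}ᶜ : Set ι), S j) :=
    ⟨hd i₀, h2 ▸ Submodule.neg_mem _ h3⟩
  rw [hS (f i₀)] at h4
  exact h4

lemma arcVerts_union {V : Type*} (E F : Set (V × V)) :
    arcVerts (E ∪ F) = arcVerts E ∪ arcVerts F := by
  ext u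
  simp only [arcVerts, Set.mem_union, Set.mem_setOf_eq]
  constructor
  · rintro (⟨w, hw | hw⟩ | ⟨w, hw⟩)
    · exact Or.inl (Or.inl ⟨w, hw⟩)
    · exact Or.inr (Or.inl ⟨w, hw⟩)
    · rcases hw with hw | hw
      · exact Or.inl (Or.inr ⟨w, hw⟩)
      · exact Or.inr (Or.inr ⟨w, hw⟩)
  · rintro ((⟨w, hw⟩ | ⟨w, hw⟩) | (⟨w, hw⟩ | ⟨w, hw⟩))
    · exact Or.inl ⟨w, Or.inl hw⟩
    · exact Or.inr ⟨w, Or.inl hw⟩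
    · exact Or.inl ⟨w, Or.inr hw⟩
    · exact Or.inr ⟨w, Or.inr hw⟩

lemma arcVerts_empty {V : Type*} : arcVerts (∅ : Set (V × V)) = ∅ := by
  ext u; simp [arcVerts]

lemma cycle_consensus {m n : ℕ} {E : Set (Fin m × Fin m)} (hE : IsDirectedCycleOn E)
    {k : Fin m → Fin m → ℕ} {C : (j i : Fin m) → Matrix (Fin (k j i)) (Fin n) ℝ}
    (hindep : IndepFamily (fun a : ↥E => LinearMap.ker (C a.1.1 a.1.2).mulVecLin))
    {x : Fin m → Fin n → ℝ}
    (hk : ∀ j i : Fin m, (j, i) ∈ E → (C j i).mulVecLin (x j - x i) = 0) :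
    ∀ u ∈ arcVerts E, ∀ w ∈ arcVerts E, x u = x w := by
  obtain ⟨ℓ, hℓ, v, hvinj, hEeq⟩ := hE
  haveI : NeZero ℓ := ⟨by omega⟩
  have harc : ∀ i : Fin ℓ, (v i, v (i + ⟨1, by omega⟩)) ∈ E := by
    intro i; rw [hEeq]; exact ⟨i, rfl⟩
  set f : Fin ℓ → ↥E := fun i => ⟨(v i, v (i + ⟨1, by omega⟩)), harc i⟩ with hf
  have hfinj : Function.Injective f := by
    intro i j hij
    have : v i = v j := congrArg (fun a : ↥E => a.1.1) hij
    exact hvinj this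
  set d : Fin ℓ → (Fin n → ℝ) := fun i => x (v i) - x (v (i + ⟨1, by omega⟩)) with hd
  have hdm : ∀ i, d i ∈ LinearMap.ker (C ((f i).1.1) ((f i).1.2)).mulVecLin := by
    intro i
    exact LinearMap.mem_ker.2 (hk _ _ (harc i))
  have hsum : ∑ i, d i = 0 := by
    rw [Finset.sum_sub_distrib, sub_eq_zero]
    exact (Equiv.sum_comp (Equiv.addRight (⟨1, by omega⟩ : Fin ℓ)) (fun i => x (v i))).symm
  have hzero : ∀ i, d i = 0 := fun i =>
    indep_zero _ hindep f hfinj d hdm hsum i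
  have heq : ∀ i : Fin ℓ, x (v i) = x (v (i + ⟨1, by omega⟩)) := by
    intro i; exact sub_eq_zero.1 (hzero i)
  have hconst : ∀ t : ℕ, ∀ ht : t < ℓ, x (v ⟨t, ht⟩) = x (v ⟨0, by omega⟩) := by
    intro t
    induction t with
    | zero => intro ht; rfl
    | succ s ih =>
      intro ht
      have hs : s < ℓ := by omega
      have hadd : (⟨s, hs⟩ : Fin ℓ) + ⟨1, by omega⟩ = ⟨s + 1, ht⟩ := by
        apply Fin.ext
        simp [Fin.add_def, Nat.mod_eq_of_lt ht]
      rw [← hadd, ← heq ⟨s, hs⟩]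
      exact ih hs
  have hrange : ∀ u ∈ arcVerts E, ∃ i : Fin ℓ, u = v i := by
    intro u hu
    rcases hu with ⟨w, hw⟩ | ⟨w, hw⟩
    · rw [hEeq] at hw; obtain ⟨i, hi⟩ := hw
      exact ⟨i, congrArg Prod.fst hi⟩
    · rw [hEeq] at hw; obtain ⟨i, hi⟩ := hw
      exact ⟨_, congrArg Prod.snd hi⟩
  intro u hu w hw
  obtain ⟨i, rfl⟩ := hrange u hu
  obtain ⟨j, rfl⟩ := hrange w hw
  rw [show (i : Fin ℓ) = ⟨i.1, i.2⟩ from rfl, hconst i.1 i.2,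
      show (j : Fin ℓ) = ⟨j.1, j.2⟩ from rfl, hconst j.1 j.2]

lemma path_consensus {m n : ℕ} {E : Set (Fin m × Fin m)} {a b : Fin m}
    (hE : IsDirectedPathFrom E a b)
    {k : Fin m → Fin m → ℕ} {C : (j i : Fin m) → Matrix (Fin (k j i)) (Fin n) ℝ}
    (hindep : IndepFamily (fun q : ↥E => LinearMap.ker (C q.1.1 q.1.2).mulVecLin))
    {x : Fin m → Fin n → ℝ}
    (hk : ∀ j i : Fin m, (j, i) ∈ E → (C j i).mulVecLin (x j - x i) = 0)
    (hab : x a = x b) :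
    ∀ u ∈ arcVerts E, x u = x a := by
  obtain ⟨ℓ, hℓ, v, hvinj, hv0, hvl, hEeq⟩ := hE
  have harc : ∀ i : Fin ℓ, (v i.castSucc, v i.succ) ∈ E := by
    intro i; rw [hEeq]; exact ⟨i, rfl⟩
  set f : Fin ℓ → ↥E := fun i => ⟨(v i.castSucc, v i.succ), harc i⟩ with hf
  have hfinj : Function.Injective f := by
    intro i j hij
    have : v i.castSucc = v j.castSucc := congrArg (fun q : ↥E => q.1.1) hij
    exact Fin.castSucc_injective ℓ (hvinj this)
  set d : Fin ℓ → (Fin n → ℝ) := fun i => x (v i.castSucc) - x (v i.succ) with hd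
  have hdm : ∀ i, d i ∈ LinearMap.ker (C ((f i).1.1) ((f i).1.2)).mulVecLin :=
    fun i => LinearMap.mem_ker.2 (hk _ _ (harc i))
  set g : ℕ → (Fin n → ℝ) := fun t => x (v ⟨t % (ℓ + 1), Nat.mod_lt _ (Nat.succ_pos ℓ)⟩) with hg
  have hgc : ∀ i : Fin ℓ, g i.1 = x (v i.castSucc) := by
    intro i
    have : (⟨i.1 % (ℓ + 1), Nat.mod_lt _ (Nat.succ_pos ℓ)⟩ : Fin (ℓ+1)) = i.castSucc := by
      apply Fin.ext; simp [Nat.mod_eq_of_lt (by omega : i.1 < ℓ + 1)]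
    rw [hg]; simp only []; rw [this]
  have hgs : ∀ i : Fin ℓ, g (i.1 + 1) = x (v i.succ) := by
    intro i
    have : (⟨(i.1 + 1) % (ℓ + 1), Nat.mod_lt _ (Nat.succ_pos ℓ)⟩ : Fin (ℓ+1)) = i.succ := by
      apply Fin.ext; simp [Nat.mod_eq_of_lt (by omega : i.1 + 1 < ℓ + 1)]
    rw [hg]; simp only []; rw [this]
  have hsum : ∑ i, d i = 0 := by
    have h1 : ∀ i : Fin ℓ, d i = g i.1 - g (i.1 + 1) := by
      intro i; rw [hgc i, hgs i]
    calc ∑ i, d i = ∑ i : Fin ℓ, (g i.1 - g (i.1 + 1)) :=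
            Finset.sum_congr rfl (fun i _ => h1 i)
      _ = ∑ t ∈ Finset.range ℓ, (g t - g (t + 1)) :=
            Fin.sum_univ_eq_sum_range (fun t => g t - g (t + 1)) ℓ
      _ = g 0 - g ℓ := Finset.sum_range_sub' g ℓ
      _ = 0 := by
            have e0 : (⟨0 % (ℓ + 1), Nat.mod_lt _ (Nat.succ_pos ℓ)⟩ : Fin (ℓ+1)) = 0 := by
              apply Fin.ext; simp
            have el : (⟨ℓ % (ℓ + 1), Nat.mod_lt _ (Nat.succ_pos ℓ)⟩ : Fin (ℓ+1)) = Fin.last ℓ := by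
              apply Fin.ext; simp [Nat.mod_eq_of_lt (by omega : ℓ < ℓ + 1)]
            rw [hg]; simp only []; rw [e0, el, hv0, hvl, hab, sub_self]
  have hzero : ∀ i, d i = 0 := fun i => indep_zero _ hindep f hfinj d hdm hsum i
  have heq : ∀ i : Fin ℓ, x (v i.castSucc) = x (v i.succ) := fun i => sub_eq_zero.1 (hzero i)
  have hconst : ∀ i : Fin (ℓ + 1), x (v i) = x (v 0) := by
    intro i
    induction i using Fin.induction with
    | zero => rfl
    | succ i ih => rw [← heq i]; exact ih
  intro u hu
  rw [← hv0]
  rcases hu with ⟨w, hw⟩ | ⟨w, hw⟩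
  · rw [hEeq] at hw; obtain ⟨i, hi⟩ := hw
    have : u = v i.castSucc := congrArg Prod.fst hi
    rw [this]; exact hconst _
  · rw [hEeq] at hw; obtain ⟨i, hi⟩ := hw
    have : u = v i.succ := congrArg Prod.snd hi
    rw [this]; exact hconst _

/-- Let `N` (arc set `A`) be a strongly connected directed graph without self-arcs
on `m ≥ 2` vertices whose arc `(j,i)` carries the matrix `C j i`, and let
`Ear 0, …, Ear p` be an ear decomposition of `N`.  If for each ear the family of kernels of the
matrices on its arcs is independent, then local agreement implies consensus. -/
theorem stmt_4 (m n p : ℕ) (hm : 2 ≤ m) (A : Set (Fin m × Fin m))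
    (hself : ∀ v : Fin m, (v, v) ∉ A)
    (hsc : ∀ u v : Fin m, Relation.ReflTransGen (fun a b => (a, b) ∈ A) u v)
    (k : Fin m → Fin m → ℕ)
    (C : (j i : Fin m) → Matrix (Fin (k j i)) (Fin n) ℝ)
    (Ear : Fin (p + 1) → Set (Fin m × Fin m))
    (hE0 : IsDirectedCycleOn (Ear 0))
    (hdisj : Pairwise fun i j => Disjoint (Ear i) (Ear j))
    (hunion : ⋃ i, Ear i = A)
    (hglue : ∀ i : Fin (p + 1), i ≠ 0 →
      (IsDirectedCycleOn (Ear i) ∧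
        ∃ w : Fin m, arcVerts (Ear i) ∩ arcVerts (⋃ j, ⋃ (_ : j < i), Ear j) = {w}) ∨
      (∃ a b : Fin m, IsDirectedPathFrom (Ear i) a b ∧
        arcVerts (Ear i) ∩ arcVerts (⋃ j, ⋃ (_ : j < i), Ear j) = {a, b}))
    (hindep : ∀ e : Fin (p + 1),
      IndepFamily (fun a : ↥(Ear e) => LinearMap.ker (C a.1.1 a.1.2).mulVecLin))
    (x : Fin m → (Fin n → ℝ))
    (hla : ∀ j i : Fin m, (j, i) ∈ A → (C j i).mulVec (x j) = (C j i).mulVec (x i)) :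
    ∀ i j : Fin m, x i = x j := by
  have hsubA : ∀ e : Fin (p+1), Ear e ⊆ A := by
    intro e; rw [← hunion]; exact Set.subset_iUnion Ear e
  have hkE : ∀ e : Fin (p+1), ∀ j i : Fin m, (j, i) ∈ Ear e →
      (C j i).mulVecLin (x j - x i) = 0 := by
    intro e j i h
    rw [map_sub, Matrix.mulVecLin_apply, Matrix.mulVecLin_apply, hla j i (hsubA e h), sub_self]
  have hWstep : ∀ (t : ℕ) (h2 : t + 1 < p + 1),
      (⋃ j, ⋃ (_ : j < (⟨t + 1, h2⟩ : Fin (p+1))), Ear j)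
        = Ear ⟨t, by omega⟩ ∪ ⋃ j, ⋃ (_ : j < (⟨t, by omega⟩ : Fin (p+1))), Ear j := by
    intro t h2
    ext q
    simp only [Set.mem_iUnion, Set.mem_union, Fin.lt_def]
    constructor
    · rintro ⟨j, hj, hq⟩
      by_cases hje : j.1 = t
      · left
        have : j = ⟨t, by omega⟩ := Fin.ext hje
        rwa [← this]
      · right; exact ⟨j, by omega, hq⟩
    · rintro (hq | ⟨j, hj, hq⟩)
      · exact ⟨⟨t, by omega⟩, by simp, hq⟩
      · exact ⟨j, by omega, hq⟩
  have key : ∀ t : ℕ, ∀ ht : t < p + 1,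
      ∀ u ∈ arcVerts (Ear ⟨t, ht⟩) ∪
          arcVerts (⋃ j, ⋃ (_ : j < (⟨t, ht⟩ : Fin (p+1))), Ear j),
      ∀ w ∈ arcVerts (Ear ⟨t, ht⟩) ∪
          arcVerts (⋃ j, ⋃ (_ : j < (⟨t, ht⟩ : Fin (p+1))), Ear j),
      x u = x w := by
    intro t
    induction t with
    | zero =>
      intro ht u hu w hw
      have h0 : (⟨0, ht⟩ : Fin (p+1)) = 0 := rfl
      have hempty : (⋃ j, ⋃ (_ : j < (⟨0, ht⟩ : Fin (p+1))), Ear j) = ∅ := by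
        rw [h0]
        simp [Fin.not_lt_zero]
      rw [hempty, arcVerts_empty, Set.union_empty, h0] at hu hw
      exact cycle_consensus hE0 (hindep 0) (hkE 0) u hu w hw
    | succ s ih =>
      intro ht
      have hs : s < p + 1 := by omega
      have hne : (⟨s + 1, ht⟩ : Fin (p+1)) ≠ 0 := by
        intro h
        have := congrArg Fin.val h
        simp at this
      have hW : arcVerts (⋃ j, ⋃ (_ : j < (⟨s + 1, ht⟩ : Fin (p+1))), Ear j)
          = arcVerts (Ear ⟨s, hs⟩) ∪
            arcVerts (⋃ j, ⋃ (_ : j < (⟨s, hs⟩ : Fin (p+1))), Ear j) := by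
        rw [hWstep s ht, arcVerts_union]
      have IH : ∀ u ∈ arcVerts (⋃ j, ⋃ (_ : j < (⟨s + 1, ht⟩ : Fin (p+1))), Ear j),
          ∀ w ∈ arcVerts (⋃ j, ⋃ (_ : j < (⟨s + 1, ht⟩ : Fin (p+1))), Ear j), x u = x w := by
        rw [hW]
        exact ih hs
      rcases hglue ⟨s + 1, ht⟩ hne with ⟨hcyc, w₀, hwint⟩ | ⟨a, b, hpath, habint⟩
      · have hcc := cycle_consensus hcyc (hindep ⟨s + 1, ht⟩) (hkE ⟨s + 1, ht⟩)
        have hw₀ : w₀ ∈ arcVerts (Ear ⟨s + 1, ht⟩) ∩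
            arcVerts (⋃ j, ⋃ (_ : j < (⟨s + 1, ht⟩ : Fin (p+1))), Ear j) := by
          rw [hwint]; rfl
        intro u hu w hw
        have hx : ∀ z, z ∈ arcVerts (Ear ⟨s + 1, ht⟩) ∪
            arcVerts (⋃ j, ⋃ (_ : j < (⟨s + 1, ht⟩ : Fin (p+1))), Ear j) → x z = x w₀ := by
          intro z hz
          rcases hz with hz | hz
          · exact hcc z hz w₀ hw₀.1
          · exact IH z hz w₀ hw₀.2
        rw [hx u hu, hx w hw]
      · have hamem : a ∈ arcVerts (Ear ⟨s + 1, ht⟩) ∩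
            arcVerts (⋃ j, ⋃ (_ : j < (⟨s + 1, ht⟩ : Fin (p+1))), Ear j) := by
          rw [habint]; left; rfl
        have hbmem : b ∈ arcVerts (Ear ⟨s + 1, ht⟩) ∩
            arcVerts (⋃ j, ⋃ (_ : j < (⟨s + 1, ht⟩ : Fin (p+1))), Ear j) := by
          rw [habint]; right; rfl
        have hab : x a = x b := IH a hamem.2 b hbmem.2
        have hpc := path_consensus hpath (hindep ⟨s + 1, ht⟩) (hkE ⟨s + 1, ht⟩) hab
        intro u hu w hw
        have hx : ∀ z, z ∈ arcVerts (Ear ⟨s + 1, ht⟩) ∪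
            arcVerts (⋃ j, ⋃ (_ : j < (⟨s + 1, ht⟩ : Fin (p+1))), Ear j) → x z = x a := by
          intro z hz
          rcases hz with hz | hz
          · exact hpc z hz
          · exact IH z hz a hamem.2
        rw [hx u hu, hx w hw]
  have hplt : p < p + 1 := by omega
  have hall : ∀ u : Fin m, u ∈ arcVerts (Ear ⟨p, hplt⟩) ∪
      arcVerts (⋃ j, ⋃ (_ : j < (⟨p, hplt⟩ : Fin (p+1))), Ear j) := by
    intro u
    haveI : Nontrivial (Fin m) := Fin.nontrivial_iff_two_le.mpr hm
    obtain ⟨w, hw⟩ := exists_ne u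
    have hA : u ∈ arcVerts A := by
      rcases (hsc u w).cases_head with heq | ⟨c, hc, _⟩
      · exact absurd heq.symm hw
      · exact Or.inl ⟨c, hc⟩
    have hAeq : A = Ear ⟨p, hplt⟩ ∪ ⋃ j, ⋃ (_ : j < (⟨p, hplt⟩ : Fin (p+1))), Ear j := by
      rw [← hunion]
      ext q
      simp only [Set.mem_iUnion, Set.mem_union, Fin.lt_def]
      constructor
      · rintro ⟨j, hq⟩
        by_cases hj : j.1 = p
        · left
          have : j = ⟨p, hplt⟩ := Fin.ext hj
          rwa [← this]
        · right; exact ⟨j, by omega, hq⟩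
      · rintro (hq | ⟨j, _, hq⟩)
        · exact ⟨_, hq⟩
        · exact ⟨j, hq⟩
    rw [hAeq, arcVerts_union] at hA
    exact hA
  intro i j
  exact key p hplt i (hall i) j (hall j)
end

section
/- Let N be a strongly connected symmetric directed graph on m vertices where each arc (j,i) carries a real matrix C_{ji} with n columns, and suppose the weighted graph is well-configured, i.e., kernel(C J̄ᵀ) = span(Ī). Let each agent update x_i(t+1) = x_i(t) − α(t) ∑_{j∈N_i} (C_{ij}ᵀC_{ij} + C_{ji}ᵀC_{ji})(x_i(t) − x_j(t)), where α(t) > 0 satisfies ∑_t α(t) = ∞ and ∑_t α(t)² < ∞. Then all m agents' states x_i(t) converge, as t → ∞, to a common limit vector in ℝ^n. -/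
/-!
Stacking the agents' states into one vector `v`, the update is the gradient step
`v ← v - α t • (Bᵀ B) v` for the energy `‖B v‖²` of the weighted incidence matrix `B = C J̄ᵀ`;
symmetry of the graph is what makes the sums over in- and out-arcs of a vertex combine into
the agent's update. In an orthonormal eigenbasis of the positive operator `Bᵀ B` each
coordinate evolves by `c ← (1 - α t μ) c`, which is constant for `μ = 0` and tends to `0` for
`μ > 0`, since `∏ (1 - α t μ) ≤ exp (-μ ∑ α t) → 0` once `α t μ ≤ 1` (summability of `α t ²`
forces `α t → 0`). Hence `v` converges to a vector of `ker B`, which by well-configuredness is a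
consensus vector.
-/

open Filter Matrix Topology

theorem tendsto_zero_of_succ_eq_one_sub_mul {a c : ℕ → ℝ} (ha0 : Tendsto a atTop (𝓝 0))
    (hadiv : Tendsto (fun T => ∑ t ∈ Finset.range T, a t) atTop atTop)
    (hc : ∀ t, c (t + 1) = (1 - a t) * c t) :
    Tendsto c atTop (𝓝 0) := by
  set S : ℕ → ℝ := fun T => ∑ t ∈ Finset.range T, a t
  obtain ⟨t₀, ht₀⟩ := eventually_atTop.mp (ha0.eventually (eventually_le_nhds one_pos))
  have hbound : ∀ t ≥ t₀, |c t| ≤ |c t₀| * Real.exp (S t₀ - S t) := by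
    intro t ht
    induction t, ht using Nat.le_induction with
    | base => simp
    | succ t ht ih =>
      calc |c (t + 1)| = (1 - a t) * |c t| := by
            rw [hc, abs_mul, abs_of_nonneg (sub_nonneg.mpr (ht₀ t ht))]
        _ ≤ Real.exp (-a t) * (|c t₀| * Real.exp (S t₀ - S t)) := by
            gcongr
            linarith [Real.add_one_le_exp (-a t)]
        _ = |c t₀| * Real.exp (S t₀ - S (t + 1)) := by
            rw [show S (t + 1) = S t + a t from Finset.sum_range_succ _ _, mul_left_comm,
              ← Real.exp_add]
            ring_nf
  have hexp : Tendsto (fun t => |c t₀| * Real.exp (S t₀ - S t)) atTop (𝓝 0) := by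
    simpa [sub_eq_add_neg] using (Real.tendsto_exp_atBot.comp
      (tendsto_atBot_add_const_left atTop (S t₀) (tendsto_neg_atTop_atBot.comp hadiv))).const_mul
        |c t₀|
  rw [tendsto_zero_iff_abs_tendsto_zero]
  exact squeeze_zero' (Eventually.of_forall fun t => abs_nonneg _)
    (eventually_atTop.mpr ⟨t₀, hbound⟩) hexp

theorem exists_tendsto_of_succ_eq_one_sub_mul {α c : ℕ → ℝ} {μ : ℝ} (hμ : 0 ≤ μ)
    (hα0 : Tendsto α atTop (𝓝 0))
    (hαdiv : Tendsto (fun T => ∑ t ∈ Finset.range T, α t) atTop atTop)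
    (hc : ∀ t, c (t + 1) = (1 - α t * μ) * c t) :
    ∃ ℓ, μ * ℓ = 0 ∧ Tendsto c atTop (𝓝 ℓ) := by
  rcases hμ.eq_or_lt with rfl | hμ
  · have hconst : c = fun _ => c 0 := funext fun t => by
      induction t with
      | zero => rfl
      | succ t ih => simpa [hc] using ih
    exact ⟨c 0, zero_mul _, hconst ▸ tendsto_const_nhds⟩
  · refine ⟨0, mul_zero μ, tendsto_zero_of_succ_eq_one_sub_mul ?_ ?_ hc⟩
    · simpa using hα0.mul_const μ
    · simpa only [← Finset.sum_mul] using hαdiv.atTop_mul_const hμ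

theorem LinearMap.IsPositive.exists_tendsto_of_succ_eq_sub_smul {E : Type*}
    [NormedAddCommGroup E] [InnerProductSpace ℝ E] [FiniteDimensional ℝ E]
    {T : E →ₗ[ℝ] E} (hT : T.IsPositive) {α : ℕ → ℝ} (hα0 : Tendsto α atTop (𝓝 0))
    (hαdiv : Tendsto (fun T => ∑ t ∈ Finset.range T, α t) atTop atTop)
    {X : ℕ → E} (hX : ∀ t, X (t + 1) = X t - α t • T (X t)) :
    ∃ y, T y = 0 ∧ Tendsto X atTop (𝓝 y) := by
  have hn : Module.finrank ℝ E = Module.finrank ℝ E := rfl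
  set b := hT.isSymmetric.eigenvectorBasis hn with hb
  set μ := hT.isSymmetric.eigenvalues hn with hμ
  have hcoord : ∀ i t, b.repr (X (t + 1)) i = (1 - α t * μ i) * b.repr (X t) i := by
    intro i t
    rw [hX, map_sub, map_smul, PiLp.sub_apply, PiLp.smul_apply, smul_eq_mul,
      hT.isSymmetric.eigenvectorBasis_apply_self_apply, ← hb, ← hμ, RCLike.ofReal_real_eq_id,
      id_eq]
    ring
  choose ℓ hℓ hlim using fun i => exists_tendsto_of_succ_eq_one_sub_mul
    (c := fun t => b.repr (X t) i) (hT.nonneg_eigenvalues hn i) hα0 hαdiv (hcoord i)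
  refine ⟨∑ i, ℓ i • b i, ?_, ?_⟩
  · simp [b, smul_smul, mul_comm (ℓ _), hℓ]
  · have hrepr : X = fun t => ∑ i, b.repr (X t) i • b i :=
      funext fun t => (b.sum_repr (X t)).symm
    rw [hrepr]
    exact tendsto_finsetSum _ fun i _ => (hlim i).smul_const (b i)

theorem Matrix.exists_tendsto_of_succ_eq_sub_transpose_mul_self_mulVec {ι κ : Type*}
    [Fintype ι] [DecidableEq ι] [Fintype κ] (B : Matrix κ ι ℝ) {α : ℕ → ℝ}
    (hα0 : Tendsto α atTop (𝓝 0))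
    (hαdiv : Tendsto (fun T => ∑ t ∈ Finset.range T, α t) atTop atTop)
    {v : ℕ → ι → ℝ} (hv : ∀ t, v (t + 1) = v t - α t • (Bᵀ * B) *ᵥ v t) :
    ∃ w, B *ᵥ w = 0 ∧ Tendsto v atTop (𝓝 w) := by
  have hT : (Bᵀ * B).toEuclideanLin.IsPositive := by
    simpa [conjTranspose_eq_transpose_of_trivial] using posSemidef_conjTranspose_mul_self B
  obtain ⟨y, hy, hlim⟩ := hT.exists_tendsto_of_succ_eq_sub_smul hα0 hαdiv
    (X := fun t => WithLp.toLp 2 (v t)) (fun t => by simp [hv])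
  refine ⟨y.ofLp, ?_, (PiLp.continuous_ofLp 2 _).tendsto y |>.comp hlim⟩
  rw [← conjTranspose_mul_self_mulVec_eq_zero, conjTranspose_eq_transpose_of_trivial]
  simpa using congrArg WithLp.ofLp hy

theorem sum_single_snd_sub_single_fst_mul {m : ℕ} (A : Finset (Fin m × Fin m))
    (g : Fin m × Fin m → ℝ) (i : Fin m) :
    ∑ a ∈ A, (Pi.single a.2 1 - Pi.single a.1 1 : Fin m → ℝ) i * g a =
      ∑ j ∈ Finset.univ.filter (fun j => (j, i) ∈ A), g (j, i) -
        ∑ j ∈ Finset.univ.filter (fun j => (i, j) ∈ A), g (i, j) := by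
  have hterm : ∀ a : Fin m × Fin m,
      (if a ∈ A then (Pi.single a.2 1 - Pi.single a.1 1 : Fin m → ℝ) i * g a else 0) =
        (if a.2 = i then (if a ∈ A then g a else 0) else 0) -
          (if a.1 = i then (if a ∈ A then g a else 0) else 0) := by
    intro a
    simp only [Pi.sub_apply, Pi.single_apply, eq_comm (a := i)]
    split_ifs <;> ring
  rw [← Finset.sum_ite_mem_eq, Finset.sum_filter, Finset.sum_filter]
  simp only [hterm, Finset.sum_sub_distrib, Fintype.sum_prod_type]
  rw [Finset.sum_comm (f := fun x y => if x = i then _ else 0)]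
  simp only [Finset.sum_ite_eq', Finset.mem_univ, if_true]

section WeightedIncidence

variable {m n : ℕ} (A : Finset (Fin m × Fin m)) {k : Fin m → Fin m → ℕ}
  (C : (j i : Fin m) → Matrix (Fin (k j i)) (Fin n) ℝ)

/-- The matrix `C J̄ᵀ`, acting on stacked states `v (i, l) = x i l`: its block of rows for the
arc `(j, i)` sends `v` to `C j i (x i - x j)`. -/
def weightedIncidence : Matrix (Σ a : A, Fin (k a.1.1 a.1.2)) (Fin m × Fin n) ℝ :=
  Matrix.of fun e p =>
    (Pi.single e.1.1.2 1 - Pi.single e.1.1.1 1 : Fin m → ℝ) p.1 * C e.1.1.1 e.1.1.2 e.2 p.2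

theorem weightedIncidence_mulVec (v : Fin m × Fin n → ℝ) (e : Σ a : A, Fin (k a.1.1 a.1.2)) :
    (weightedIncidence A C *ᵥ v) e =
      (C e.1.1.1 e.1.1.2 *ᵥ (Function.curry v e.1.1.2 - Function.curry v e.1.1.1)) e.2 := by
  simp [weightedIncidence, mulVec, dotProduct, Fintype.sum_prod_type, Pi.single_apply,
    Finset.sum_sub_distrib, mul_sub, Finset.sum_ite_eq', mul_comm, Function.curry]

theorem weightedIncidence_mulVec_eq_zero_iff (v : Fin m × Fin n → ℝ) :
    weightedIncidence A C *ᵥ v = 0 ↔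
      ∀ j i, (j, i) ∈ A → C j i *ᵥ (Function.curry v j - Function.curry v i) = 0 := by
  constructor
  · intro h j i hji
    ext r
    have := congrFun h ⟨⟨(j, i), hji⟩, r⟩
    rw [weightedIncidence_mulVec, ← neg_sub, mulVec_neg] at this
    simpa using this
  · intro h
    ext e
    rw [weightedIncidence_mulVec, ← neg_sub, mulVec_neg, h _ _ e.1.2]
    simp

theorem transpose_mul_weightedIncidence_mulVec_apply (hsym : ∀ p ∈ A, (p.2, p.1) ∈ A)
    (v : Fin m × Fin n → ℝ) (i : Fin m) (l : Fin n) :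
    (((weightedIncidence A C)ᵀ * weightedIncidence A C) *ᵥ v) (i, l) =
      (∑ j ∈ Finset.univ.filter (fun j => (j, i) ∈ A),
        ((C i j)ᵀ * C i j + (C j i)ᵀ * C j i) *ᵥ
          (Function.curry v i - Function.curry v j)) l := by
  have hexpand : (((weightedIncidence A C)ᵀ * weightedIncidence A C) *ᵥ v) (i, l) =
      ∑ a ∈ A, (Pi.single a.2 1 - Pi.single a.1 1 : Fin m → ℝ) i *
        (((C a.1 a.2)ᵀ * C a.1 a.2) *ᵥ (Function.curry v a.2 - Function.curry v a.1)) l := by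
    simp only [← mulVec_mulVec]
    rw [funext (weightedIncidence_mulVec A C v), ← Finset.sum_coe_sort A]
    simp only [mulVec, dotProduct, transpose_apply, Fintype.sum_sigma, weightedIncidence,
      of_apply, Finset.mul_sum, mul_assoc]
  have hout : Finset.univ.filter (fun j => (i, j) ∈ A) =
      Finset.univ.filter (fun j => (j, i) ∈ A) :=
    Finset.filter_congr fun j _ => ⟨hsym _, hsym _⟩
  rw [hexpand, sum_single_snd_sub_single_fst_mul, hout, ← Finset.sum_sub_distrib]
  simp only [Finset.sum_apply, add_mulVec, ← mulVec_mulVec, mulVec_sub, Pi.add_apply,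
    Pi.sub_apply]
  refine Finset.sum_congr rfl fun j _ => ?_
  ring

end WeightedIncidence

theorem stmt_6_general (m n : ℕ) (A : Finset (Fin m × Fin m))
    (hsym : ∀ p ∈ A, (p.2, p.1) ∈ A)
    (k : Fin m → Fin m → ℕ)
    (C : (j i : Fin m) → Matrix (Fin (k j i)) (Fin n) ℝ)
    (hwc : ∀ x : Fin m → (Fin n → ℝ),
      (∀ j i : Fin m, (j, i) ∈ A → (C j i).mulVec (x j - x i) = 0) ↔
        ∃ z : Fin n → ℝ, ∀ i, x i = z)
    (α : ℕ → ℝ)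
    (hαdiv : Tendsto (fun T => ∑ t ∈ Finset.range T, α t) atTop atTop)
    (hαsq : Summable fun t => (α t) ^ 2)
    (x : ℕ → Fin m → (Fin n → ℝ))
    (hupd : ∀ t (i : Fin m), x (t + 1) i = x t i -
      α t • ∑ j ∈ Finset.univ.filter (fun j : Fin m => (j, i) ∈ A),
        ((C i j)ᵀ * C i j + (C j i)ᵀ * C j i).mulVec (x t i - x t j)) :
    ∃ z : Fin n → ℝ, ∀ i : Fin m, Tendsto (fun t => x t i) atTop (nhds z) := by
  have hα0 : Tendsto α atTop (𝓝 0) := by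
    rw [tendsto_zero_iff_abs_tendsto_zero]
    simpa [Function.comp_def, Real.sqrt_sq_eq_abs] using
      (Real.continuous_sqrt.tendsto 0).comp hαsq.tendsto_atTop_zero
  obtain ⟨w, hw, hlim⟩ :=
    (weightedIncidence A C).exists_tendsto_of_succ_eq_sub_transpose_mul_self_mulVec hα0 hαdiv
      (v := fun t => Function.uncurry (x t)) fun t => by
        ext ⟨i, l⟩
        simp [transpose_mul_weightedIncidence_mulVec_apply A C hsym, hupd]
  obtain ⟨z, hz⟩ :=
    (hwc (Function.curry w)).1 ((weightedIncidence_mulVec_eq_zero_iff A C w).1 hw)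
  refine ⟨z, fun i => tendsto_pi_nhds.2 fun l => ?_⟩
  simpa [← hz i] using tendsto_pi_nhds.1 hlim (i, l)

/-- On a strongly connected symmetric directed graph (arc set `A`, matrix `C j i`
on arc `(j,i)`) that is well-configured (`kernel (C J̄ᵀ) = span Ī`, i.e. local agreement holds
exactly on consensus vectors), the diminishing-stepsize gradient algorithm
`x i (t+1) = x i t − α t • ∑_{j ∈ N_i} (C i jᵀ C i j + C j iᵀ C j i) (x i t − x j t)`
with `α t > 0`, `∑ α t = ∞`, `∑ (α t)² < ∞`, drives all agents to a common limit. -/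
theorem stmt_6 (m n : ℕ) (A : Finset (Fin m × Fin m))
    (hsym : ∀ p ∈ A, (p.2, p.1) ∈ A)
    (hsc : ∀ u v : Fin m, Relation.ReflTransGen (fun a b => (a, b) ∈ A) u v)
    (k : Fin m → Fin m → ℕ)
    (C : (j i : Fin m) → Matrix (Fin (k j i)) (Fin n) ℝ)
    (hwc : ∀ x : Fin m → (Fin n → ℝ),
      (∀ j i : Fin m, (j, i) ∈ A → (C j i).mulVec (x j - x i) = 0) ↔
        ∃ z : Fin n → ℝ, ∀ i, x i = z)
    (α : ℕ → ℝ) (hαpos : ∀ t, 0 < α t)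
    (hαdiv : Tendsto (fun T => ∑ t ∈ Finset.range T, α t) atTop atTop)
    (hαsq : Summable fun t => (α t) ^ 2)
    (x : ℕ → Fin m → (Fin n → ℝ))
    (hupd : ∀ t (i : Fin m), x (t + 1) i = x t i -
      α t • ∑ j ∈ Finset.univ.filter (fun j : Fin m => (j, i) ∈ A),
        ((C i j)ᵀ * C i j + (C j i)ᵀ * C j i).mulVec (x t i - x t j)) :
    ∃ z : Fin n → ℝ, ∀ i : Fin m, Tendsto (fun t => x t i) atTop (nhds z) :=
  stmt_6_general m n A hsym k C hwc α hαdiv hαsq x hupd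
end

section
/- Let N be a strongly connected symmetric directed graph on m vertices where each arc (j,i) carries a real matrix C_{ji} with n columns and orthonormal rows (C_{ji}C_{ji}ᵀ = I), and suppose the weighted graph is well-configured, i.e., kernel(C J̄ᵀ) = span(Ī). Let each agent update x_i(t+1) = x_i(t) − (1/(2(d_i+1))) ∑_{j∈N_i} (C_{ij}ᵀC_{ij} + C_{ji}ᵀC_{ji})(x_i(t) − x_j(t)), where d_i = |N_i|. Then all m agents reach a consensus exponentially fast: there exist z ∈ ℝ^n, c ≥ 0 and ρ ∈ [0,1) such that ‖x_i(t) − z‖ ≤ c ρᵗ for all i and t. -/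
/-
In the inner product `⟪x, y⟫_W = ∑ᵢ (dᵢ + 1) xᵢ ⬝ yᵢ` the update `x ↦ T x` is self-adjoint, and
`⟪x - T x, x⟫_W` is a quarter of the energy
`∑_{(j,i) ∈ A} (xᵢ - xⱼ)ᵀ (C_{ij}ᵀ C_{ij} + C_{ji}ᵀ C_{ji}) (xᵢ - xⱼ)`. The energy is nonnegative
and, because every `C_{ji}` has orthonormal rows, at most `8 ∑ᵢ dᵢ ‖xᵢ‖² ≤ 8m/(m+1) ‖x‖²_W`.
Hence `I - T` is positive semidefinite with norm below `2`, so `T` fixes its eigenspace for `1`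
and strictly contracts the orthogonal complement, uniformly by compactness of the unit sphere.
A fixed point has zero energy, i.e. satisfies local agreement, so by well-configuredness it is a
consensus vector.
-/

open Matrix
open scoped RealInnerProductSpace

namespace Matrix

theorem dotProduct_mulVec_self_le_of_mul_transpose_eq_one {ι κ : Type*} [Fintype ι] [Fintype κ]
    [DecidableEq κ] (M : Matrix κ ι ℝ) (hM : M * Mᵀ = 1) (v : ι → ℝ) :
    M *ᵥ v ⬝ᵥ M *ᵥ v ≤ v ⬝ᵥ v := by
  have hproj : Mᵀ *ᵥ (M *ᵥ v) ⬝ᵥ Mᵀ *ᵥ (M *ᵥ v) = M *ᵥ v ⬝ᵥ M *ᵥ v := by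
    rw [dotProduct_mulVec, vecMul_transpose, mulVec_mulVec, hM, one_mulVec]
  have hcross : v ⬝ᵥ Mᵀ *ᵥ (M *ᵥ v) = M *ᵥ v ⬝ᵥ M *ᵥ v := by
    rw [dotProduct_mulVec, vecMul_transpose]
  -- `0 ≤ ‖v - Mᵀ M v‖² = ‖v‖² - ‖M v‖²`
  have h := dotProduct_star_self_nonneg (v - Mᵀ *ᵥ (M *ᵥ v))
  simp only [star_trivial, sub_dotProduct, dotProduct_sub, hproj, hcross,
    dotProduct_comm (Mᵀ *ᵥ (M *ᵥ v)) v] at h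
  linarith

theorem sub_dotProduct_sub_le {ι : Type*} [Fintype ι] (a b : ι → ℝ) :
    (a - b) ⬝ᵥ (a - b) ≤ 2 * (a ⬝ᵥ a) + 2 * (b ⬝ᵥ b) := by
  have h := dotProduct_star_self_nonneg (a + b)
  simp only [star_trivial, add_dotProduct, dotProduct_add, sub_dotProduct, dotProduct_sub,
    dotProduct_comm b a] at h ⊢
  linarith

end Matrix

section Normed

variable {F : Type*} [NormedAddCommGroup F] [NormedSpace ℝ F]

theorem LinearMap.exists_lt_one_forall_norm_apply_le [FiniteDimensional ℝ F] (f : F →ₗ[ℝ] F)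
    (K : Submodule ℝ F) (hf : ∀ v ∈ K, v ≠ 0 → ‖f v‖ < ‖v‖) :
    ∃ ρ, 0 ≤ ρ ∧ ρ < 1 ∧ ∀ v ∈ K, ‖f v‖ ≤ ρ * ‖v‖ := by
  set S : Set F := (K : Set F) ∩ Metric.sphere 0 1
  have hS : IsCompact S := (isCompact_sphere 0 1).inter_left K.closed_of_finiteDimensional
  have hnormalize : ∀ v ∈ K, v ≠ 0 → ‖v‖⁻¹ • v ∈ S := fun v hv hv0 =>
    ⟨K.smul_mem _ hv, by simp [norm_smul, hv0]⟩
  have hhom : ∀ v, ‖f v‖ = ‖v‖ * ‖f (‖v‖⁻¹ • v)‖ := fun v => by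
    rcases eq_or_ne v 0 with rfl | hv0
    · simp
    · rw [map_smul, norm_smul, norm_inv, norm_norm, ← mul_assoc,
        mul_inv_cancel₀ (norm_ne_zero_iff.2 hv0), one_mul]
  rcases S.eq_empty_or_nonempty with hempty | hne
  · refine ⟨0, le_rfl, one_pos, fun v hv => ?_⟩
    have hv0 : v = 0 := by_contra fun hv0 => hempty.subset (hnormalize v hv hv0)
    simp [hv0]
  · obtain ⟨u, ⟨huK, hu1⟩, hmax⟩ :=
      hS.exists_isMaxOn hne (continuous_norm.comp f.continuous_of_finiteDimensional).continuousOn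
    have hu1 : ‖u‖ = 1 := by simpa using hu1
    refine ⟨‖f u‖, norm_nonneg _, ?_, fun v hv => ?_⟩
    · simpa [hu1] using hf u huK (by rintro rfl; simp at hu1)
    · rcases eq_or_ne v 0 with rfl | hv0
      · simp
      · rw [hhom v, mul_comm]
        exact mul_le_mul_of_nonneg_right (hmax (hnormalize v hv hv0)) (norm_nonneg v)

theorem LinearMap.norm_pow_apply_le {f : F →ₗ[ℝ] F} {K : Submodule ℝ F} {ρ : ℝ} (hρ : 0 ≤ ρ)
    (hK : ∀ v ∈ K, f v ∈ K) (hf : ∀ v ∈ K, ‖f v‖ ≤ ρ * ‖v‖) {v : F} (hv : v ∈ K) (t : ℕ) :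
    ‖(f ^ t) v‖ ≤ ρ ^ t * ‖v‖ := by
  induction t with
  | zero => simp
  | succ t ih =>
    have hmem : (f ^ t) v ∈ K := by
      rw [Module.End.pow_apply]
      exact Set.MapsTo.iterate hK t hv
    rw [pow_succ', Module.End.mul_apply, pow_succ', mul_assoc]
    exact (hf _ hmem).trans (mul_le_mul_of_nonneg_left ih hρ)

end Normed

section InnerProduct

variable {E : Type*} [NormedAddCommGroup E] [InnerProductSpace ℝ E]

theorem LinearMap.IsSymmetric.inner_sq_le_of_nonneg {B : E →ₗ[ℝ] E} (hB : B.IsSymmetric)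
    (hpos : ∀ u, 0 ≤ ⟪B u, u⟫) (u v : E) : ⟪B u, v⟫ ^ 2 ≤ ⟪B u, u⟫ * ⟪B v, v⟫ := by
  have hquad : ∀ t : ℝ, 0 ≤ ⟪B v, v⟫ * (t * t) + 2 * ⟪B u, v⟫ * t + ⟪B u, u⟫ := fun t => by
    have h := hpos (u + t • v)
    simp only [map_add, map_smul, inner_add_left, inner_add_right, real_inner_smul_left,
      real_inner_smul_right] at h
    rw [hB v u, real_inner_comm (B u) v] at h
    linarith
  have hdiscr := discrim_le_zero hquad
  rw [discrim] at hdiscr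
  nlinarith

variable {T : E →ₗ[ℝ] E} {κ : ℝ}

theorem LinearMap.IsSymmetric.norm_sub_apply_sq_le (hT : T.IsSymmetric)
    (hpos : ∀ u, 0 ≤ ⟪u - T u, u⟫) (hle : ∀ u, ⟪u - T u, u⟫ ≤ κ * ‖u‖ ^ 2) (u : E) :
    ‖u - T u‖ ^ 2 ≤ κ * ⟪u - T u, u⟫ := by
  set B : E →ₗ[ℝ] E := 1 - T
  have hBapply : ∀ v, B v = v - T v := fun v => rfl
  have hB : B.IsSymmetric := LinearMap.IsSymmetric.one.sub hT
  simp only [← hBapply] at hpos hle ⊢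
  have hcs := hB.inner_sq_le_of_nonneg hpos u (B u)
  have hBB := hle (B u)
  rw [real_inner_self_eq_norm_sq] at hcs
  have hκ : 0 ≤ κ * ⟪B u, u⟫ := by
    rcases le_total 0 κ with hκ | hκ
    · exact mul_nonneg hκ (hpos u)
    · have hzero : ⟪B u, u⟫ = 0 := le_antisymm
        ((hle u).trans (mul_nonpos_of_nonpos_of_nonneg hκ (sq_nonneg _))) (hpos u)
      simp [hzero]
  nlinarith [hpos u, sq_nonneg ‖B u‖]

theorem LinearMap.IsSymmetric.apply_eq_self_of_inner_sub_apply_eq_zero (hT : T.IsSymmetric)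
    (hpos : ∀ u, 0 ≤ ⟪u - T u, u⟫) (hle : ∀ u, ⟪u - T u, u⟫ ≤ κ * ‖u‖ ^ 2) {v : E}
    (hv : ⟪v - T v, v⟫ = 0) : T v = v := by
  have h := hT.norm_sub_apply_sq_le hpos hle v
  rw [hv, mul_zero] at h
  exact (sub_eq_zero.1 (norm_eq_zero.1
    ((pow_eq_zero_iff two_ne_zero).1 (le_antisymm h (sq_nonneg _))))).symm

theorem LinearMap.IsSymmetric.norm_apply_sq_le (hT : T.IsSymmetric)
    (hpos : ∀ u, 0 ≤ ⟪u - T u, u⟫) (hle : ∀ u, ⟪u - T u, u⟫ ≤ κ * ‖u‖ ^ 2) (u : E) :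
    ‖T u‖ ^ 2 ≤ ‖u‖ ^ 2 - (2 - κ) * ⟪u - T u, u⟫ := by
  have h := hT.norm_sub_apply_sq_le hpos hle u
  calc ‖T u‖ ^ 2 = ‖u - (u - T u)‖ ^ 2 := by rw [sub_sub_cancel]
    _ = ‖u‖ ^ 2 - 2 * ⟪u, u - T u⟫ + ‖u - T u‖ ^ 2 := norm_sub_sq_real _ _
    _ ≤ _ := by rw [real_inner_comm]; linarith

theorem LinearMap.IsSymmetric.exists_forall_norm_pow_apply_sub_le [FiniteDimensional ℝ E]
    (hT : T.IsSymmetric) (hκ : κ < 2)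
    (hpos : ∀ u, 0 ≤ ⟪u - T u, u⟫) (hle : ∀ u, ⟪u - T u, u⟫ ≤ κ * ‖u‖ ^ 2) :
    ∃ ρ, 0 ≤ ρ ∧ ρ < 1 ∧ ∀ u, ∃ s, T s = s ∧ ∀ t : ℕ, ‖(T ^ t) u - s‖ ≤ ρ ^ t * ‖u - s‖ := by
  set S := Module.End.eigenspace T 1
  have hmemS : ∀ v, v ∈ S ↔ T v = v := fun v => by
    rw [Module.End.mem_eigenspace_iff, one_smul]
  have hstrict : ∀ v ∈ Sᗮ, v ≠ 0 → ‖T v‖ < ‖v‖ := by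
    intro v hv hv0
    have hΦ : 0 < ⟪v - T v, v⟫ := by
      refine (hpos v).lt_of_ne fun hΦ => hv0 ?_
      have hfix := hT.apply_eq_self_of_inner_sub_apply_eq_zero hpos hle hΦ.symm
      exact inner_self_eq_zero.1 (Submodule.inner_right_of_mem_orthogonal ((hmemS v).2 hfix) hv)
    have h := hT.norm_apply_sq_le hpos hle v
    exact (pow_lt_pow_iff_left₀ (norm_nonneg _) (norm_nonneg _) two_ne_zero).1 (by nlinarith)
  obtain ⟨ρ, hρ0, hρ1, hρ⟩ := T.exists_lt_one_forall_norm_apply_le Sᗮ hstrict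
  have hprojS : ∀ u, T (S.starProjection u) = S.starProjection u := fun u =>
    (hmemS _).1 (S.starProjection_apply_mem u)
  refine ⟨ρ, hρ0, hρ1, fun u => ⟨S.starProjection u, hprojS u, fun t => ?_⟩⟩
  have hsub : (T ^ t) u - S.starProjection u = (T ^ t) (u - S.starProjection u) := by
    rw [map_sub, Module.End.pow_apply T t (S.starProjection u), Function.iterate_fixed (hprojS u)]
  rw [hsub]
  exact T.norm_pow_apply_le hρ0 (hT.invariant_orthogonalComplement_eigenspace 1) hρ
    (S.sub_starProjection_mem_orthogonal u) t

end InnerProduct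

namespace MatrixConsensus

theorem sum_swap_of_symm {α M : Type*} [AddCommMonoid M] {A : Finset (α × α)}
    (hsym : ∀ p ∈ A, (p.2, p.1) ∈ A) (f : α × α → M) :
    ∑ p ∈ A, f p.swap = ∑ p ∈ A, f p :=
  Finset.sum_nbij' Prod.swap Prod.swap hsym hsym (by simp) (by simp) (fun _ _ => rfl)

section Graph

variable {V : Type*} [Fintype V] [DecidableEq V] (A : Finset (V × V))

def inNbrs (i : V) : Finset V := Finset.univ.filter fun j => (j, i) ∈ A

noncomputable def weight (i : V) : ℝ := (inNbrs A i).card + 1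

theorem weight_pos (i : V) : 0 < weight A i := by
  unfold weight
  positivity

theorem card_inNbrs_le (i : V) :
    ((inNbrs A i).card : ℝ) ≤ Fintype.card V / (Fintype.card V + 1) * weight A i := by
  have hcard : ((inNbrs A i).card : ℝ) ≤ Fintype.card V := by
    exact_mod_cast Finset.card_le_univ _
  rw [div_mul_eq_mul_div, le_div_iff₀ (by positivity), weight]
  nlinarith

theorem sum_eq_sum_inNbrs {M : Type*} [AddCommMonoid M] (f : V × V → M) :
    ∑ p ∈ A, f p = ∑ i, ∑ j ∈ inNbrs A i, f (j, i) := by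
  simp only [inNbrs, Finset.sum_filter]
  rw [Finset.sum_comm, ← Fintype.sum_prod_type', ← Finset.sum_filter, Finset.filter_mem_eq_inter,
    Finset.univ_inter]

/-- Turns the weighted inner product `∑ᵢ (dᵢ + 1) xᵢ ⬝ yᵢ`, in which the update is self-adjoint,
into the Euclidean one. -/
noncomputable def weightedEquiv {ι : Type*} : (V → ι → ℝ) ≃ₗ[ℝ] EuclideanSpace ℝ (V × ι) :=
  LinearEquiv.piCongrRight (fun i => LinearEquiv.smulOfNeZero ℝ (ι → ℝ) √(weight A i)
      (Real.sqrt_pos.2 (weight_pos A i)).ne') ≪≫ₗ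
    (LinearEquiv.curry ℝ ℝ V ι).symm ≪≫ₗ (WithLp.linearEquiv 2 ℝ (V × ι → ℝ)).symm

theorem weightedEquiv_apply {ι : Type*} (x : V → ι → ℝ) (p : V × ι) :
    weightedEquiv A x p = √(weight A p.1) * x p.1 p.2 :=
  rfl

end Graph

section ArcGram

variable {V ι : Type*} {R : V → V → Type*} [∀ j i, Fintype (R j i)]

def arcGram (C : (j i : V) → Matrix (R j i) ι ℝ) (i j : V) : Matrix ι ι ℝ :=
  (C i j)ᵀ * C i j + (C j i)ᵀ * C j i

theorem arcGram_comm (C : (j i : V) → Matrix (R j i) ι ℝ) (i j : V) :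
    arcGram C i j = arcGram C j i :=
  add_comm _ _

variable [Fintype ι] (C : (j i : V) → Matrix (R j i) ι ℝ)

theorem arcGram_mulVec_dotProduct (i j : V) (v w : ι → ℝ) :
    arcGram C i j *ᵥ v ⬝ᵥ w = C i j *ᵥ v ⬝ᵥ C i j *ᵥ w + C j i *ᵥ v ⬝ᵥ C j i *ᵥ w := by
  simp only [arcGram, add_mulVec, add_dotProduct, ← mulVec_mulVec, mulVec_transpose,
    ← dotProduct_mulVec]

theorem arcGram_mulVec_dotProduct_comm (i j : V) (v w : ι → ℝ) :
    arcGram C i j *ᵥ v ⬝ᵥ w = arcGram C i j *ᵥ w ⬝ᵥ v := by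
  rw [arcGram_mulVec_dotProduct, arcGram_mulVec_dotProduct, dotProduct_comm (C i j *ᵥ v),
    dotProduct_comm (C j i *ᵥ v)]

theorem arcGram_mulVec_dotProduct_self_nonneg (i j : V) (v : ι → ℝ) :
    0 ≤ arcGram C i j *ᵥ v ⬝ᵥ v := by
  rw [arcGram_mulVec_dotProduct]
  simpa using add_nonneg (dotProduct_star_self_nonneg (C i j *ᵥ v))
    (dotProduct_star_self_nonneg (C j i *ᵥ v))

theorem arcGram_mulVec_dotProduct_self_le [∀ j i, DecidableEq (R j i)] {i j : V}
    (hij : C i j * (C i j)ᵀ = 1) (hji : C j i * (C j i)ᵀ = 1) (v : ι → ℝ) :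
    arcGram C i j *ᵥ v ⬝ᵥ v ≤ 2 * (v ⬝ᵥ v) := by
  rw [arcGram_mulVec_dotProduct]
  linarith [(C i j).dotProduct_mulVec_self_le_of_mul_transpose_eq_one hij v,
    (C j i).dotProduct_mulVec_self_le_of_mul_transpose_eq_one hji v]

end ArcGram

section Energy

variable {V ι : Type*} [Fintype ι] {R : V → V → Type*} [∀ j i, Fintype (R j i)]
  (A : Finset (V × V)) (C : (j i : V) → Matrix (R j i) ι ℝ)

def energy (x y : V → ι → ℝ) : ℝ :=
  ∑ p ∈ A, arcGram C p.2 p.1 *ᵥ (x p.2 - x p.1) ⬝ᵥ (y p.2 - y p.1)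

theorem energy_comm (x y : V → ι → ℝ) : energy A C x y = energy A C y x :=
  Finset.sum_congr rfl fun _ _ => arcGram_mulVec_dotProduct_comm C _ _ _ _

theorem energy_self_nonneg (x : V → ι → ℝ) : 0 ≤ energy A C x x :=
  Finset.sum_nonneg fun _ _ => arcGram_mulVec_dotProduct_self_nonneg C _ _ _

theorem energy_eq_two_mul_sum (hsym : ∀ p ∈ A, (p.2, p.1) ∈ A) (x y : V → ι → ℝ) :
    energy A C x y = 2 * ∑ p ∈ A, arcGram C p.2 p.1 *ᵥ (x p.2 - x p.1) ⬝ᵥ y p.2 := by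
  have hswap : ∑ p ∈ A, arcGram C p.2 p.1 *ᵥ (x p.2 - x p.1) ⬝ᵥ y p.1 =
      -∑ p ∈ A, arcGram C p.2 p.1 *ᵥ (x p.2 - x p.1) ⬝ᵥ y p.2 := by
    rw [← sum_swap_of_symm hsym (fun p => arcGram C p.2 p.1 *ᵥ (x p.2 - x p.1) ⬝ᵥ y p.1),
      ← Finset.sum_neg_distrib]
    refine Finset.sum_congr rfl fun p _ => ?_
    rw [Prod.fst_swap, Prod.snd_swap, arcGram_comm, ← neg_sub, mulVec_neg, neg_dotProduct]
  simp only [energy, dotProduct_sub, Finset.sum_sub_distrib, hswap]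
  ring

theorem mulVec_sub_eq_zero_of_energy_self_eq_zero {x : V → ι → ℝ} (h : energy A C x x = 0)
    {j i : V} (hji : (j, i) ∈ A) : C j i *ᵥ (x j - x i) = 0 := by
  have harc := (Finset.sum_eq_zero_iff_of_nonneg
    fun p _ => arcGram_mulVec_dotProduct_self_nonneg C p.2 p.1 (x p.2 - x p.1)).1 h (j, i) hji
  rw [arcGram_mulVec_dotProduct] at harc
  have hij := dotProduct_star_self_nonneg (C i j *ᵥ (x i - x j))
  have hji := dotProduct_star_self_nonneg (C j i *ᵥ (x i - x j))
  simp only [star_trivial] at hij hji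
  have hzero : C j i *ᵥ (x i - x j) = 0 := dotProduct_self_eq_zero.1 (by linarith)
  rw [← neg_sub, mulVec_neg, hzero, neg_zero]

end Energy

variable {V ι : Type*} [Fintype V] [DecidableEq V] [Fintype ι] {R : V → V → Type*}
  [∀ j i, Fintype (R j i)] (A : Finset (V × V)) (C : (j i : V) → Matrix (R j i) ι ℝ)

noncomputable def step : Module.End ℝ (V → ι → ℝ) :=
  let π : V → (V → ι → ℝ) →ₗ[ℝ] ι → ℝ := LinearMap.proj
  LinearMap.pi fun i => π i - (1 / (2 * weight A i)) •
    ∑ j ∈ inNbrs A i, (arcGram C i j).mulVecLin ∘ₗ (π i - π j)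

theorem step_apply (x : V → ι → ℝ) (i : V) :
    step A C x i = x i - (1 / (2 * weight A i)) •
      ∑ j ∈ inNbrs A i, arcGram C i j *ᵥ (x i - x j) := by
  simp [step]

theorem energy_self_le [∀ j i, DecidableEq (R j i)] (hsym : ∀ p ∈ A, (p.2, p.1) ∈ A)
    (horth : ∀ p ∈ A, C p.1 p.2 * (C p.1 p.2)ᵀ = 1) (x : V → ι → ℝ) :
    energy A C x x ≤ 8 * ∑ i, (inNbrs A i).card * (x i ⬝ᵥ x i) := by
  have hdeg : ∑ p ∈ A, x p.2 ⬝ᵥ x p.2 = ∑ i, (inNbrs A i).card * (x i ⬝ᵥ x i) := by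
    simp [sum_eq_sum_inNbrs A (fun p => x p.2 ⬝ᵥ x p.2)]
  have hdeg' : ∑ p ∈ A, x p.1 ⬝ᵥ x p.1 = ∑ p ∈ A, x p.2 ⬝ᵥ x p.2 :=
    sum_swap_of_symm hsym (fun p => x p.2 ⬝ᵥ x p.2)
  calc energy A C x x ≤ ∑ p ∈ A, 2 * ((x p.2 - x p.1) ⬝ᵥ (x p.2 - x p.1)) :=
        Finset.sum_le_sum fun p hp =>
          arcGram_mulVec_dotProduct_self_le C (horth _ (hsym p hp)) (horth p hp) _
    _ ≤ ∑ p ∈ A, (4 * (x p.2 ⬝ᵥ x p.2) + 4 * (x p.1 ⬝ᵥ x p.1)) :=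
        Finset.sum_le_sum fun p _ => by linarith [sub_dotProduct_sub_le (x p.2) (x p.1)]
    _ = 8 * ∑ i, (inNbrs A i).card * (x i ⬝ᵥ x i) := by
        rw [Finset.sum_add_distrib, ← Finset.mul_sum, ← Finset.mul_sum, hdeg', hdeg]
        ring

theorem inner_weightedEquiv (x y : V → ι → ℝ) :
    ⟪weightedEquiv A x, weightedEquiv A y⟫ = ∑ i, weight A i * (x i ⬝ᵥ y i) := by
  simp only [PiLp.inner_apply, Fintype.sum_prod_type, weightedEquiv_apply, dotProduct,
    Finset.mul_sum, RCLike.inner_apply, conj_trivial]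
  refine Finset.sum_congr rfl fun i _ => Finset.sum_congr rfl fun a _ => ?_
  linear_combination (x i a * y i a) * Real.mul_self_sqrt (weight_pos A i).le

theorem norm_le_norm_weightedEquiv (x : V → ι → ℝ) (i : V) :
    ‖x i‖ ≤ ‖weightedEquiv A x‖ := by
  refine (pi_norm_le_iff_of_nonneg (norm_nonneg _)).2 fun a => ?_
  have hw : 1 ≤ √(weight A i) := Real.one_le_sqrt.2 (by simp [weight])
  calc ‖x i a‖ ≤ ‖weightedEquiv A x (i, a)‖ := by
        rw [weightedEquiv_apply, norm_mul, Real.norm_of_nonneg (Real.sqrt_nonneg _)]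
        exact le_mul_of_one_le_left (norm_nonneg _) hw
    _ ≤ ‖weightedEquiv A x‖ := PiLp.norm_apply_le _ _

theorem inner_weightedEquiv_step (hsym : ∀ p ∈ A, (p.2, p.1) ∈ A) (x y : V → ι → ℝ) :
    ⟪weightedEquiv A (step A C x), weightedEquiv A y⟫ =
      ⟪weightedEquiv A x, weightedEquiv A y⟫ - energy A C x y / 4 := by
  rw [inner_weightedEquiv, inner_weightedEquiv, energy_eq_two_mul_sum A C hsym, sum_eq_sum_inNbrs A,
    Finset.mul_sum, Finset.sum_div, ← Finset.sum_sub_distrib]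
  refine Finset.sum_congr rfl fun i _ => ?_
  rw [step_apply, sub_dotProduct, smul_dotProduct, sum_dotProduct, smul_eq_mul]
  field_simp [(weight_pos A i).ne']
  ring

noncomputable def weightedStep : Module.End ℝ (EuclideanSpace ℝ (V × ι)) :=
  (weightedEquiv A).conj (step A C)

theorem weightedStep_weightedEquiv (x : V → ι → ℝ) :
    weightedStep A C (weightedEquiv A x) = weightedEquiv A (step A C x) := by
  simp [weightedStep]

theorem inner_weightedStep (hsym : ∀ p ∈ A, (p.2, p.1) ∈ A) (u v : EuclideanSpace ℝ (V × ι)) :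
    ⟪weightedStep A C u, v⟫ =
      ⟪u, v⟫ - energy A C ((weightedEquiv A).symm u) ((weightedEquiv A).symm v) / 4 := by
  obtain ⟨x, rfl⟩ := (weightedEquiv A).surjective u
  obtain ⟨y, rfl⟩ := (weightedEquiv A).surjective v
  rw [weightedStep_weightedEquiv, inner_weightedEquiv_step A C hsym,
    LinearEquiv.symm_apply_apply, LinearEquiv.symm_apply_apply]

theorem isSymmetric_weightedStep (hsym : ∀ p ∈ A, (p.2, p.1) ∈ A) :
    (weightedStep A C).IsSymmetric := fun u v => by
  rw [inner_weightedStep A C hsym, real_inner_comm (weightedStep A C v) u,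
    inner_weightedStep A C hsym, energy_comm, real_inner_comm]

theorem inner_sub_weightedStep (hsym : ∀ p ∈ A, (p.2, p.1) ∈ A) (u : EuclideanSpace ℝ (V × ι)) :
    ⟪u - weightedStep A C u, u⟫ =
      energy A C ((weightedEquiv A).symm u) ((weightedEquiv A).symm u) / 4 := by
  rw [inner_sub_left, inner_weightedStep A C hsym]
  ring

theorem inner_sub_weightedStep_nonneg (hsym : ∀ p ∈ A, (p.2, p.1) ∈ A)
    (u : EuclideanSpace ℝ (V × ι)) : 0 ≤ ⟪u - weightedStep A C u, u⟫ := by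
  rw [inner_sub_weightedStep A C hsym]
  exact div_nonneg (energy_self_nonneg A C _) zero_le_four

theorem inner_sub_weightedStep_le [∀ j i, DecidableEq (R j i)] (hsym : ∀ p ∈ A, (p.2, p.1) ∈ A)
    (horth : ∀ p ∈ A, C p.1 p.2 * (C p.1 p.2)ᵀ = 1) (u : EuclideanSpace ℝ (V × ι)) :
    ⟪u - weightedStep A C u, u⟫ ≤ 2 * (Fintype.card V / (Fintype.card V + 1)) * ‖u‖ ^ 2 := by
  obtain ⟨x, rfl⟩ := (weightedEquiv A).surjective u
  rw [inner_sub_weightedStep A C hsym, LinearEquiv.symm_apply_apply,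
    ← real_inner_self_eq_norm_sq, inner_weightedEquiv]
  have hdeg : ∑ i, ((inNbrs A i).card : ℝ) * (x i ⬝ᵥ x i) ≤
      Fintype.card V / (Fintype.card V + 1) * ∑ i, weight A i * (x i ⬝ᵥ x i) := by
    rw [Finset.mul_sum]
    refine Finset.sum_le_sum fun i _ => ?_
    rw [← mul_assoc]
    exact mul_le_mul_of_nonneg_right (card_inNbrs_le A i)
      (by simpa using dotProduct_star_self_nonneg (x i))
  linarith [energy_self_le A C hsym horth x]

theorem mulVec_sub_eq_zero_of_weightedStep_apply_eq (hsym : ∀ p ∈ A, (p.2, p.1) ∈ A)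
    {u : EuclideanSpace ℝ (V × ι)} (hu : weightedStep A C u = u) {j i : V} (hji : (j, i) ∈ A) :
    C j i *ᵥ ((weightedEquiv A).symm u j - (weightedEquiv A).symm u i) = 0 := by
  refine mulVec_sub_eq_zero_of_energy_self_eq_zero A C ?_ hji
  have h := inner_sub_weightedStep A C hsym u
  rw [hu, sub_self, inner_zero_left] at h
  linarith

end MatrixConsensus

open MatrixConsensus

theorem stmt_7_general (m n : ℕ) (A : Finset (Fin m × Fin m))
    (hsym : ∀ p ∈ A, (p.2, p.1) ∈ A)
    (k : Fin m → Fin m → ℕ)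
    (C : (j i : Fin m) → Matrix (Fin (k j i)) (Fin n) ℝ)
    (horth : ∀ p ∈ A, C p.1 p.2 * (C p.1 p.2)ᵀ = 1)
    (hwc : ∀ x : Fin m → (Fin n → ℝ),
      (∀ j i : Fin m, (j, i) ∈ A → (C j i).mulVec (x j - x i) = 0) ↔
        ∃ z : Fin n → ℝ, ∀ i, x i = z)
    (x : ℕ → Fin m → (Fin n → ℝ))
    (hupd : ∀ t (i : Fin m), x (t + 1) i = x t i -
      (1 / (2 * ((Finset.univ.filter (fun j : Fin m => (j, i) ∈ A)).card + 1)) : ℝ) •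
        ∑ j ∈ Finset.univ.filter (fun j : Fin m => (j, i) ∈ A),
          ((C i j)ᵀ * C i j + (C j i)ᵀ * C j i).mulVec (x t i - x t j)) :
    ∃ (z : Fin n → ℝ) (c ρ : ℝ), 0 ≤ c ∧ 0 ≤ ρ ∧ ρ < 1 ∧
      ∀ (i : Fin m) (t : ℕ), ‖x t i - z‖ ≤ c * ρ ^ t := by
  set e := weightedEquiv (ι := Fin n) A
  set T := weightedStep A C
  have htraj : ∀ t, e (x t) = (T ^ t) (e (x 0)) := by
    intro t
    induction t with
    | zero => rfl
    | succ t ih =>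
      have hstep : x (t + 1) = step A C (x t) := funext fun i => by rw [hupd, step_apply]; rfl
      rw [hstep, ← weightedStep_weightedEquiv, ih, pow_succ', Module.End.mul_apply]
  have hκ : 2 * ((Fintype.card (Fin m) : ℝ) / (Fintype.card (Fin m) + 1)) < 2 :=
    mul_lt_of_lt_one_right two_pos ((div_lt_one (by positivity)).2 (lt_add_one _))
  obtain ⟨ρ, hρ0, hρ1, hconv⟩ :=
    (isSymmetric_weightedStep A C hsym).exists_forall_norm_pow_apply_sub_le hκ
      (inner_sub_weightedStep_nonneg A C hsym) (inner_sub_weightedStep_le A C hsym horth)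
  obtain ⟨s, hs, hdecay⟩ := hconv (e (x 0))
  obtain ⟨z, hz⟩ := (hwc (e.symm s)).1 fun j i hji =>
    mulVec_sub_eq_zero_of_weightedStep_apply_eq A C hsym hs hji
  refine ⟨z, ‖e (x 0) - s‖, ρ, norm_nonneg _, hρ0, hρ1, fun i t => ?_⟩
  calc ‖x t i - z‖ = ‖(x t - e.symm s) i‖ := by rw [Pi.sub_apply, hz]
    _ ≤ ‖e (x t - e.symm s)‖ := norm_le_norm_weightedEquiv A _ i
    _ = ‖(T ^ t) (e (x 0)) - s‖ := by rw [map_sub, htraj, e.apply_symm_apply]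
    _ ≤ ρ ^ t * ‖e (x 0) - s‖ := hdecay t
    _ = ‖e (x 0) - s‖ * ρ ^ t := mul_comm _ _

/-- On a strongly connected symmetric directed graph (arc set `A`, matrix `C j i`
with orthonormal rows on arc `(j,i)`) that is well-configured, the fixed-stepsize algorithm
`x i (t+1) = x i t − (1/(2(dᵢ+1))) ∑_{j ∈ N_i} (C i jᵀ C i j + C j iᵀ C j i)(x i t − x j t)`
drives all agents to a consensus exponentially fast. -/
theorem stmt_7 (m n : ℕ) (A : Finset (Fin m × Fin m))
    (hsym : ∀ p ∈ A, (p.2, p.1) ∈ A)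
    (hsc : ∀ u v : Fin m, Relation.ReflTransGen (fun a b => (a, b) ∈ A) u v)
    (k : Fin m → Fin m → ℕ)
    (C : (j i : Fin m) → Matrix (Fin (k j i)) (Fin n) ℝ)
    (horth : ∀ p ∈ A, C p.1 p.2 * (C p.1 p.2)ᵀ = 1)
    (hwc : ∀ x : Fin m → (Fin n → ℝ),
      (∀ j i : Fin m, (j, i) ∈ A → (C j i).mulVec (x j - x i) = 0) ↔
        ∃ z : Fin n → ℝ, ∀ i, x i = z)
    (x : ℕ → Fin m → (Fin n → ℝ))
    (hupd : ∀ t (i : Fin m), x (t + 1) i = x t i -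
      (1 / (2 * ((Finset.univ.filter (fun j : Fin m => (j, i) ∈ A)).card + 1)) : ℝ) •
        ∑ j ∈ Finset.univ.filter (fun j : Fin m => (j, i) ∈ A),
          ((C i j)ᵀ * C i j + (C j i)ᵀ * C j i).mulVec (x t i - x t j)) :
    ∃ (z : Fin n → ℝ) (c ρ : ℝ), 0 ≤ c ∧ 0 ≤ ρ ∧ ρ < 1 ∧
      ∀ (i : Fin m) (t : ℕ), ‖x t i - z‖ ≤ c * ρ ^ t :=
  stmt_7_general m n A hsym k C horth hwc x hupd
end

section
/- Let N be a strongly connected symmetric directed graph on m vertices whose arcs (j,i) carry real matrices C_{ji} with n columns and orthonormal rows, and suppose kernel(C J̄ᵀ) = span(Ī), where J is the incidence matrix of N. Let N(1), N(2), N(3), … be a sequence of symmetric spanning subgraphs of N such that every arc of N appears in infinitely many of the N(t). If each agent updates x_i(t+1) = x_i(t) − (1/2) ∑_{j∈N_i(t)} w_{ij}(t) (C_{ij}ᵀC_{ij} + C_{ji}ᵀC_{ji})(x_i(t) − x_j(t)), where N_i(t) is the neighbor set of agent i in N(t) and w_{ij}(t) = 1/(1 + max{d_i(t), d_j(t)})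 are the Metropolis weights of N(t) with d_i(t) = |N_i(t)|, then all m agents' states x_i(t) converge, as t → ∞, to a common limit vector in ℝ^n. -/
/-!
The Metropolis step is `F_B = I - L_B / 2` on `ℓ²(Fin m; ℝⁿ)`, where `L_B` is the edge Laplacian
of `B` with edge operators `D i j = (C i j)ᵀ C i j + (C j i)ᵀ C j i`. Orthonormal rows give
`‖D v‖² ≤ 2 ⟪v, D v⟫`, and the Metropolis weights at a vertex sum to at most `m / (m + 1)`, so
`‖L_B x‖² ≤ 4 s ⟪x, L_B x⟫` with `s < 1`. Hence every `F_B` is a paracontraction: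
`‖F_B x‖ ≤ ‖x‖`, with equality only at fixed points.

Iterating finitely many linear paracontractions converges (Elsner–Koltracht–Neumann): the norms
decrease to the norm of a cluster point `y`, which forces every step taken near `y` to fix `y`,
and from then on the distance to `y` cannot grow. As every arc of `A` occurs infinitely often,
the limit is fixed by a step containing it, so `C j i (y j - y i) = 0` on every arc, and
well-configuredness turns this into consensus.
-/

open Filter Matrix

/-- The number of neighbors of vertex `i` in the symmetric graph with arc set `B`. -/
def nbrCard {m : ℕ} (B : Finset (Fin m × Fin m)) (i : Fin m) : ℕ :=
  (Finset.univ.filter (fun j : Fin m => (j, i) ∈ B)).card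

open Topology Set Finset
open scoped RealInnerProductSpace

structure IsParacontraction {E : Type*} [NormedAddCommGroup E] [NormedSpace ℝ E]
    (f : E →ₗ[ℝ] E) : Prop where
  norm_map_le : ∀ x, ‖f x‖ ≤ ‖x‖
  map_eq_of_norm_eq : ∀ x, ‖f x‖ = ‖x‖ → f x = x

namespace IsParacontraction

variable {E : Type*} [NormedAddCommGroup E] [NormedSpace ℝ E] {f : E →ₗ[ℝ] E}

lemma norm_map_lt (hf : IsParacontraction f) {x : E} (hx : f x ≠ x) : ‖f x‖ < ‖x‖ :=
  (hf.norm_map_le x).lt_of_ne fun h => hx (hf.map_eq_of_norm_eq x h)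

lemma continuous (hf : IsParacontraction f) : Continuous f :=
  AddMonoidHomClass.continuous_of_bound f 1 fun x => by simpa using hf.norm_map_le x

lemma dist_map_le_of_map_eq (hf : IsParacontraction f) (x : E) {y : E} (hy : f y = y) :
    dist (f x) y ≤ dist x y := by
  calc dist (f x) y = ‖f (x - y)‖ := by rw [map_sub, hy, dist_eq_norm]
    _ ≤ dist x y := (hf.norm_map_le _).trans_eq (dist_eq_norm x y).symm

lemma eventually_norm_map_lt (hf : IsParacontraction f) {y : E} (hy : f y ≠ y) :
    ∀ᶠ z in 𝓝 y, ‖f z‖ < ‖y‖ :=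
  (hf.continuous.norm.tendsto y).eventually_lt_const (hf.norm_map_lt hy)

end IsParacontraction

lemma tendsto_of_mapClusterPt_of_dist_succ_le {α : Type*} [PseudoMetricSpace α] {x : ℕ → α}
    {y : α} (hy : MapClusterPt y atTop x) {U : Set α} (hU : U ∈ 𝓝 y)
    (hstep : ∀ t, x t ∈ U → dist (x (t + 1)) y ≤ dist (x t) y) :
    Tendsto x atTop (𝓝 y) := by
  obtain ⟨δ, hδ, hδU⟩ := Metric.mem_nhds_iff.1 hU
  refine Metric.tendsto_atTop.2 fun ε hε => ?_
  obtain ⟨N, hN⟩ := (mapClusterPt_iff_frequently.1 hy _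
    (Metric.ball_mem_nhds y (lt_min hε hδ))).exists
  have hstay : ∀ t ≥ N, dist (x t) y < min ε δ := by
    intro t ht
    induction t, ht using Nat.le_induction with
    | base => exact hN
    | succ t _ ih => exact (hstep t (hδU (ih.trans_le (min_le_right _ _)))).trans_lt ih
  exact ⟨N, fun t ht => (hstay t ht).trans_le (min_le_left _ _)⟩

theorem exists_tendsto_of_isParacontraction {E : Type*} [NormedAddCommGroup E] [NormedSpace ℝ E]
    [ProperSpace E] {f : ℕ → E →ₗ[ℝ] E}
    (hfin : (range f).Finite) (hf : ∀ t, IsParacontraction (f t)) {x : ℕ → E}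
    (hx : ∀ t, x (t + 1) = f t (x t)) :
    ∃ y, Tendsto x atTop (𝓝 y) ∧ ∀ᶠ t in atTop, f t y = y := by
  have hanti : Antitone fun t => ‖x t‖ :=
    antitone_nat_of_succ_le fun t => hx t ▸ (hf t).norm_map_le (x t)
  obtain ⟨y, -, hy⟩ := (isCompact_closedBall (0 : E) ‖x 0‖).exists_mapClusterPt
    (f := atTop) (u := x) (tendsto_principal.2 (Eventually.of_forall fun t =>
      mem_closedBall_zero_iff.2 (hanti (Nat.zero_le t))))
  have hnorm : ∀ t, ‖y‖ ≤ ‖x t‖ := fun t =>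
    (isClosed_le continuous_norm continuous_const).mem_of_mapClusterPt hy
      (eventually_atTop.2 ⟨t, fun s hs => hanti hs⟩)
  set U := {z | ∀ g ∈ range f, g y ≠ y → ‖g z‖ < ‖y‖}
  have hU : U ∈ 𝓝 y := by
    refine (eventually_all_finite hfin).2 ?_
    rintro _ ⟨t, rfl⟩
    by_cases hty : f t y = y
    · exact Eventually.of_forall fun _ h => absurd hty h
    · exact ((hf t).eventually_norm_map_lt hty).mono fun _ hz _ => hz
  -- `‖y‖ ≤ ‖x (t + 1)‖`, so a step taken near `y` cannot move `y` strictly inwards.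
  have hfix : ∀ t, x t ∈ U → f t y = y := fun t hxt => by
    by_contra hne
    exact (hnorm (t + 1)).not_gt (hx t ▸ hxt (f t) ⟨t, rfl⟩ hne)
  have hlim : Tendsto x atTop (𝓝 y) := tendsto_of_mapClusterPt_of_dist_succ_le hy hU
    fun t hxt => hx t ▸ (hf t).dist_map_le_of_map_eq (x t) (hfix t hxt)
  exact ⟨y, hlim, (hlim.eventually hU).mono hfix⟩

lemma isParacontraction_id_sub_half_smul {E : Type*} [NormedAddCommGroup E]
    [InnerProductSpace ℝ E] {L : E →ₗ[ℝ] E} {s : ℝ} (hs : s < 1) (hL₀ : ∀ x, 0 ≤ ⟪x, L x⟫)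
    (hL : ∀ x, ‖L x‖ ^ 2 ≤ 4 * s * ⟪x, L x⟫) :
    IsParacontraction (LinearMap.id - (1 / 2 : ℝ) • L) := by
  set F : E →ₗ[ℝ] E := LinearMap.id - (1 / 2 : ℝ) • L
  -- `‖x - L x / 2‖ ^ 2 = ‖x‖ ^ 2 - ⟪x, L x⟫ + ‖L x‖ ^ 2 / 4`
  have key : ∀ x, ‖F x‖ ^ 2 ≤ ‖x‖ ^ 2 - (1 - s) * ⟪x, L x⟫ := by
    intro x
    have := hL x
    simp only [F, LinearMap.sub_apply, LinearMap.id_apply, LinearMap.smul_apply, norm_sub_sq_real,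
      inner_smul_right, norm_smul, mul_pow, Real.norm_eq_abs,
      abs_of_pos (by norm_num : (0 : ℝ) < 1 / 2)]
    nlinarith
  refine ⟨fun x => ?_, fun x hx => ?_⟩
  · exact pow_le_pow_iff_left₀ (norm_nonneg _) (norm_nonneg _) two_ne_zero |>.1 <|
      (key x).trans (by nlinarith [hL₀ x])
  · have hQ : ⟪x, L x⟫ = 0 := by
      have := key x
      rw [hx] at this
      nlinarith [hL₀ x]
    have hLx : L x = 0 := norm_eq_zero.1 <| pow_eq_zero_iff two_ne_zero |>.1 <|
      le_antisymm (by simpa [hQ] using hL x) (sq_nonneg _)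
    simp [F, hLx]

lemma Finset.sum_swap_of_forall_swap_mem {α M : Type*} [AddCommMonoid M] {B : Finset (α × α)}
    (hB : ∀ p ∈ B, p.swap ∈ B) (f : α × α → M) : ∑ p ∈ B, f p.swap = ∑ p ∈ B, f p :=
  Finset.sum_nbij' Prod.swap Prod.swap hB hB (by simp) (by simp) (by simp)

lemma norm_sum_smul_sq_le {ι E : Type*} [SeminormedAddCommGroup E] [NormedSpace ℝ E]
    {s : Finset ι} {w : ι → ℝ} (hw : ∀ i ∈ s, 0 ≤ w i) (v : ι → E) :
    ‖∑ i ∈ s, w i • v i‖ ^ 2 ≤ (∑ i ∈ s, w i) * ∑ i ∈ s, w i * ‖v i‖ ^ 2 := by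
  have hle : ‖∑ i ∈ s, w i • v i‖ ≤ ∑ i ∈ s, w i * ‖v i‖ :=
    (norm_sum_le _ _).trans_eq (Finset.sum_congr rfl fun i hi => by
      rw [norm_smul, Real.norm_of_nonneg (hw i hi)])
  refine (pow_le_pow_left₀ (norm_nonneg _) hle 2).trans ?_
  exact Finset.sum_sq_le_sum_mul_sum_of_sq_le_mul s hw
    (fun i hi => mul_nonneg (hw i hi) (sq_nonneg _)) fun i _ => le_of_eq (by ring)

section EdgeLaplacian

variable {V H : Type*} [Fintype V] [DecidableEq V] [NormedAddCommGroup H] [InnerProductSpace ℝ H]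

def nbrs (B : Finset (V × V)) (i : V) : Finset V :=
  univ.filter (fun j => (j, i) ∈ B)

def edgeLaplacian (B : Finset (V × V)) (w : V → V → ℝ) (D : V → V → H →ₗ[ℝ] H) :
    PiLp 2 (fun _ : V => H) →ₗ[ℝ] PiLp 2 (fun _ : V => H) where
  toFun x := WithLp.toLp 2 fun i => ∑ j ∈ nbrs B i, w i j • D i j (x i - x j)
  map_add' x y := by ext i; simp [Finset.sum_add_distrib, add_sub_add_comm]
  map_smul' c x := by ext i; simp [Finset.smul_sum, ← smul_sub, smul_comm c]

variable {B : Finset (V × V)} {w : V → V → ℝ} {D : V → V → H →ₗ[ℝ] H}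

@[simp]
lemma edgeLaplacian_apply (x : PiLp 2 (fun _ : V => H)) (i : V) :
    edgeLaplacian B w D x i = ∑ j ∈ nbrs B i, w i j • D i j (x i - x j) :=
  rfl

lemma sum_arcs_eq_sum_nbrs {M : Type*} [AddCommMonoid M] (f : V × V → M) :
    ∑ p ∈ B, f p = ∑ i, ∑ j ∈ nbrs B i, f (j, i) :=
  Finset.sum_finset_product_right B univ _ (by simp [nbrs])

lemma inner_edgeLaplacian_self (hB : ∀ p ∈ B, p.swap ∈ B) (hw : ∀ i j, w i j = w j i)
    (hD : ∀ i j, D i j = D j i) (x : PiLp 2 (fun _ : V => H)) :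
    ⟪x, edgeLaplacian B w D x⟫ =
      (1 / 2) * ∑ p ∈ B, w p.2 p.1 * ⟪x p.2 - x p.1, D p.2 p.1 (x p.2 - x p.1)⟫ := by
  set g : V × V → ℝ := fun p => w p.2 p.1 * ⟪x p.2, D p.2 p.1 (x p.2 - x p.1)⟫
  have hg : ⟪x, edgeLaplacian B w D x⟫ = ∑ p ∈ B, g p := by
    simp [PiLp.inner_apply, inner_sum, inner_smul_right, sum_arcs_eq_sum_nbrs, g]
  -- pair each arc with its reverse
  have hswap : ∀ p, g p + g p.swap =
      w p.2 p.1 * ⟪x p.2 - x p.1, D p.2 p.1 (x p.2 - x p.1)⟫ := by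
    intro p
    simp only [g, Prod.fst_swap, Prod.snd_swap, hw p.1 p.2, hD p.1 p.2, ← neg_sub (x p.2),
      map_neg, inner_neg_right, inner_sub_left]
    ring
  rw [hg, ← Finset.sum_congr rfl fun p _ => hswap p, Finset.sum_add_distrib,
    Finset.sum_swap_of_forall_swap_mem hB g]
  ring

lemma inner_self_edgeLaplacian_nonneg (hB : ∀ p ∈ B, p.swap ∈ B) (hw : ∀ i j, w i j = w j i)
    (hD : ∀ i j, D i j = D j i) (hw₀ : ∀ i j, 0 ≤ w i j)
    (hD₀ : ∀ p ∈ B, ∀ v, 0 ≤ ⟪v, D p.2 p.1 v⟫) (x : PiLp 2 (fun _ : V => H)) :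
    0 ≤ ⟪x, edgeLaplacian B w D x⟫ := by
  rw [inner_edgeLaplacian_self hB hw hD]
  exact mul_nonneg (by norm_num)
    (Finset.sum_nonneg fun p hp => mul_nonneg (hw₀ _ _) (hD₀ p hp _))

lemma norm_edgeLaplacian_sq_le (hB : ∀ p ∈ B, p.swap ∈ B) (hw : ∀ i j, w i j = w j i)
    (hD : ∀ i j, D i j = D j i) (hw₀ : ∀ i j, 0 ≤ w i j)
    (hD₂ : ∀ p ∈ B, ∀ v, ‖D p.2 p.1 v‖ ^ 2 ≤ 2 * ⟪v, D p.2 p.1 v⟫) {s : ℝ}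
    (hs : ∀ i, ∑ j ∈ nbrs B i, w i j ≤ s)
    (x : PiLp 2 (fun _ : V => H)) :
    ‖edgeLaplacian B w D x‖ ^ 2 ≤ 4 * s * ⟪x, edgeLaplacian B w D x⟫ := by
  have hD₀ : ∀ p ∈ B, ∀ v, 0 ≤ ⟪v, D p.2 p.1 v⟫ := fun p hp v => by
    nlinarith [hD₂ p hp v, sq_nonneg ‖D p.2 p.1 v‖]
  have hrow : ∀ i, ‖edgeLaplacian B w D x i‖ ^ 2 ≤ s * ∑ j ∈ nbrs B i,
      2 * (w i j * ⟪x i - x j, D i j (x i - x j)⟫) := by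
    intro i
    have hmem : ∀ j ∈ nbrs B i, (j, i) ∈ B := by simp [nbrs]
    have hsum₀ : 0 ≤ ∑ j ∈ nbrs B i, w i j :=
      Finset.sum_nonneg fun j _ => hw₀ i j
    have hterm₀ : 0 ≤ ∑ j ∈ nbrs B i,
        2 * (w i j * ⟪x i - x j, D i j (x i - x j)⟫) :=
      Finset.sum_nonneg fun j hj =>
        mul_nonneg zero_le_two (mul_nonneg (hw₀ i j) (hD₀ _ (hmem j hj) _))
    calc ‖edgeLaplacian B w D x i‖ ^ 2
        ≤ (∑ j ∈ nbrs B i, w i j) *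
            ∑ j ∈ nbrs B i, w i j * ‖D i j (x i - x j)‖ ^ 2 :=
          norm_sum_smul_sq_le (fun j _ => hw₀ i j) _
      _ ≤ (∑ j ∈ nbrs B i, w i j) *
            ∑ j ∈ nbrs B i, 2 * (w i j * ⟪x i - x j, D i j (x i - x j)⟫) := by
          refine mul_le_mul_of_nonneg_left (Finset.sum_le_sum fun j hj => ?_) hsum₀
          nlinarith [hD₂ _ (hmem j hj) (x i - x j), hw₀ i j]
      _ ≤ s * ∑ j ∈ nbrs B i,
            2 * (w i j * ⟪x i - x j, D i j (x i - x j)⟫) :=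
          mul_le_mul_of_nonneg_right (hs i) hterm₀
  calc ‖edgeLaplacian B w D x‖ ^ 2 = ∑ i, ‖edgeLaplacian B w D x i‖ ^ 2 :=
        PiLp.norm_sq_eq_of_L2 _ _
    _ ≤ ∑ i, s * ∑ j ∈ nbrs B i,
          2 * (w i j * ⟪x i - x j, D i j (x i - x j)⟫) := Finset.sum_le_sum fun i _ => hrow i
    _ = 4 * s * ⟪x, edgeLaplacian B w D x⟫ := by
      simp only [inner_edgeLaplacian_self hB hw hD, sum_arcs_eq_sum_nbrs (B := B),
        ← Finset.mul_sum]
      ring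

lemma inner_arc_eq_zero_of_edgeLaplacian_eq_zero (hB : ∀ p ∈ B, p.swap ∈ B)
    (hw : ∀ i j, w i j = w j i) (hD : ∀ i j, D i j = D j i) (hw₀ : ∀ i j, 0 ≤ w i j)
    (hD₀ : ∀ p ∈ B, ∀ v, 0 ≤ ⟪v, D p.2 p.1 v⟫) {x : PiLp 2 (fun _ : V => H)}
    (hx : edgeLaplacian B w D x = 0) {i j : V} (hji : (j, i) ∈ B) (hwij : 0 < w i j) :
    ⟪x i - x j, D i j (x i - x j)⟫ = 0 := by
  have hsum := inner_edgeLaplacian_self hB hw hD x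
  rw [hx, inner_zero_right, eq_comm, mul_eq_zero, or_iff_right (by norm_num),
    Finset.sum_eq_zero_iff_of_nonneg fun p hp => mul_nonneg (hw₀ _ _) (hD₀ p hp _)] at hsum
  exact (mul_eq_zero.1 (hsum _ hji)).resolve_left hwij.ne'

end EdgeLaplacian

section OrthonormalRows

variable {ι κ κ' : Type*} [Fintype ι] [DecidableEq ι] [Fintype κ] [DecidableEq κ]
  [Fintype κ'] [DecidableEq κ']

lemma Matrix.toEuclideanLin_transpose (C : Matrix κ ι ℝ) :
    toEuclideanLin Cᵀ = (toEuclideanLin C).adjoint := by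
  rw [← conjTranspose_eq_transpose_of_trivial, toEuclideanLin_conjTranspose_eq_adjoint]

lemma Matrix.inner_toEuclideanLin_transpose_mul_self (C : Matrix κ ι ℝ)
    (v : EuclideanSpace ℝ ι) :
    ⟪v, toEuclideanLin (Cᵀ * C) v⟫ = ‖toEuclideanLin C v‖ ^ 2 := by
  rw [toLpLin_mul_same, LinearMap.comp_apply, toEuclideanLin_transpose,
    LinearMap.adjoint_inner_right, real_inner_self_eq_norm_sq]

lemma Matrix.norm_toEuclideanLin_transpose_apply {C : Matrix κ ι ℝ} (hC : C * Cᵀ = 1)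
    (u : EuclideanSpace ℝ κ) : ‖toEuclideanLin Cᵀ u‖ = ‖u‖ := by
  refine (sq_eq_sq₀ (norm_nonneg _) (norm_nonneg _)).1 ?_
  rw [← real_inner_self_eq_norm_sq, ← real_inner_self_eq_norm_sq, toEuclideanLin_transpose,
    LinearMap.adjoint_inner_left, ← toEuclideanLin_transpose, ← LinearMap.comp_apply,
    ← toLpLin_mul_same, hC, toLpLin_one, LinearMap.id_apply]

lemma Matrix.norm_toEuclideanLin_transpose_mul_self_apply {C : Matrix κ ι ℝ} (hC : C * Cᵀ = 1)
    (v : EuclideanSpace ℝ ι) : ‖toEuclideanLin (Cᵀ * C) v‖ = ‖toEuclideanLin C v‖ := by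
  rw [toLpLin_mul_same, LinearMap.comp_apply, norm_toEuclideanLin_transpose_apply hC]

lemma Matrix.inner_toEuclideanLin_add_transpose_mul_self (C : Matrix κ ι ℝ) (C' : Matrix κ' ι ℝ)
    (v : EuclideanSpace ℝ ι) :
    ⟪v, toEuclideanLin (Cᵀ * C + C'ᵀ * C') v⟫ =
      ‖toEuclideanLin C v‖ ^ 2 + ‖toEuclideanLin C' v‖ ^ 2 := by
  rw [map_add, LinearMap.add_apply, inner_add_right, inner_toEuclideanLin_transpose_mul_self,
    inner_toEuclideanLin_transpose_mul_self]

lemma Matrix.norm_toEuclideanLin_add_sq_le {C : Matrix κ ι ℝ} {C' : Matrix κ' ι ℝ}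
    (hC : C * Cᵀ = 1) (hC' : C' * C'ᵀ = 1) (v : EuclideanSpace ℝ ι) :
    ‖toEuclideanLin (Cᵀ * C + C'ᵀ * C') v‖ ^ 2 ≤
      2 * ⟪v, toEuclideanLin (Cᵀ * C + C'ᵀ * C') v⟫ := by
  have htri := norm_add_le (toEuclideanLin (Cᵀ * C) v) (toEuclideanLin (C'ᵀ * C') v)
  rw [norm_toEuclideanLin_transpose_mul_self_apply hC,
    norm_toEuclideanLin_transpose_mul_self_apply hC'] at htri
  rw [inner_toEuclideanLin_add_transpose_mul_self, map_add, LinearMap.add_apply]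
  nlinarith [norm_nonneg (toEuclideanLin (Cᵀ * C) v + toEuclideanLin (C'ᵀ * C') v),
    sq_nonneg (‖toEuclideanLin C v‖ - ‖toEuclideanLin C' v‖)]

end OrthonormalRows

section Metropolis

variable {m n : ℕ}

noncomputable def metropolisWeight (B : Finset (Fin m × Fin m)) (i j : Fin m) : ℝ :=
  1 / (1 + (max (nbrCard B i) (nbrCard B j) : ℝ))

lemma metropolisWeight_comm (B : Finset (Fin m × Fin m)) (i j : Fin m) :
    metropolisWeight B i j = metropolisWeight B j i := by
  rw [metropolisWeight, metropolisWeight, max_comm]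

lemma metropolisWeight_pos (B : Finset (Fin m × Fin m)) (i j : Fin m) :
    0 < metropolisWeight B i j := by
  unfold metropolisWeight
  positivity

lemma sum_metropolisWeight_le (B : Finset (Fin m × Fin m)) (i : Fin m) :
    ∑ j ∈ nbrs B i, metropolisWeight B i j ≤ m / (m + 1) := by
  have hd : (nbrCard B i : ℝ) ≤ m := by
    exact_mod_cast (card_filter_le _ _).trans_eq (card_fin m)
  calc ∑ j ∈ nbrs B i, metropolisWeight B i j
      ≤ ∑ j ∈ nbrs B i, 1 / (1 + (nbrCard B i : ℝ)) :=
        sum_le_sum fun j _ => one_div_le_one_div_of_le (by positivity)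
          (by gcongr; exact_mod_cast le_max_left _ _)
    _ = nbrCard B i / (nbrCard B i + 1) := by
        rw [sum_const, nsmul_eq_mul]
        change (nbrCard B i : ℝ) * _ = _
        field_simp
        ring
    _ ≤ m / (m + 1) := by
        rw [div_le_div_iff₀ (by positivity) (by positivity)]
        linarith

variable {k : Fin m → Fin m → ℕ} (C : (j i : Fin m) → Matrix (Fin (k j i)) (Fin n) ℝ)

noncomputable def metropolisLaplacian (B : Finset (Fin m × Fin m)) :
    PiLp 2 (fun _ : Fin m => EuclideanSpace ℝ (Fin n)) →ₗ[ℝ]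
      PiLp 2 (fun _ : Fin m => EuclideanSpace ℝ (Fin n)) :=
  edgeLaplacian B (metropolisWeight B)
    fun i j => toEuclideanLin ((C i j)ᵀ * C i j + (C j i)ᵀ * C j i)

variable {C} {B : Finset (Fin m × Fin m)}

lemma isParacontraction_metropolis (hB : ∀ p ∈ B, p.swap ∈ B)
    (hC : ∀ p ∈ B, C p.1 p.2 * (C p.1 p.2)ᵀ = 1) :
    IsParacontraction (LinearMap.id - (1 / 2 : ℝ) • metropolisLaplacian C B) := by
  have hD : ∀ i j : Fin m, toEuclideanLin ((C i j)ᵀ * C i j + (C j i)ᵀ * C j i) =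
      toEuclideanLin ((C j i)ᵀ * C j i + (C i j)ᵀ * C i j) := fun i j => by rw [add_comm]
  have h0 := inner_self_edgeLaplacian_nonneg hB (metropolisWeight_comm B) hD
      (fun i j => (metropolisWeight_pos B i j).le)
      fun p _ v => by rw [inner_toEuclideanLin_add_transpose_mul_self]; positivity
  have h1 := norm_edgeLaplacian_sq_le hB (metropolisWeight_comm B) hD
      (fun i j => (metropolisWeight_pos B i j).le)
      (fun p hp => norm_toEuclideanLin_add_sq_le (hC _ (hB p hp)) (hC p hp))
      (sum_metropolisWeight_le B)
  unfold metropolisLaplacian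
  exact isParacontraction_id_sub_half_smul
    ((div_lt_one (by positivity : (0 : ℝ) < m + 1)).2 (lt_add_one _)) h0 h1

lemma mulVec_sub_eq_zero_of_metropolisLaplacian_eq_zero (hB : ∀ p ∈ B, p.swap ∈ B)
    {y : PiLp 2 (fun _ : Fin m => EuclideanSpace ℝ (Fin n))}
    (hy : metropolisLaplacian C B y = 0) {j i : Fin m} (hji : (j, i) ∈ B) :
    C j i *ᵥ (WithLp.ofLp (y j) - WithLp.ofLp (y i)) = 0 := by
  have h := inner_arc_eq_zero_of_edgeLaplacian_eq_zero hB (metropolisWeight_comm B)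
    (fun i j => by rw [add_comm]) (fun i j => (metropolisWeight_pos B i j).le)
    (fun p _ v => by rw [inner_toEuclideanLin_add_transpose_mul_self]; positivity) hy hji
    (metropolisWeight_pos B i j)
  rw [inner_toEuclideanLin_add_transpose_mul_self] at h
  have h0 : toEuclideanLin (C j i) (y i - y j) = 0 :=
    norm_eq_zero.1 <| pow_eq_zero_iff two_ne_zero |>.1 <| by
      nlinarith [sq_nonneg ‖toEuclideanLin (C i j) (y i - y j)‖,
        sq_nonneg ‖toEuclideanLin (C j i) (y i - y j)‖]
  rw [← neg_sub, mulVec_neg, neg_eq_zero]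
  simpa [mulVec_sub] using congrArg WithLp.ofLp h0

end Metropolis

theorem stmt_13_general (m n : ℕ) (A : Finset (Fin m × Fin m))
    (k : Fin m → Fin m → ℕ)
    (C : (j i : Fin m) → Matrix (Fin (k j i)) (Fin n) ℝ)
    (horth : ∀ p ∈ A, C p.1 p.2 * (C p.1 p.2)ᵀ = 1)
    (hwc : ∀ x : Fin m → (Fin n → ℝ),
      (∀ j i : Fin m, (j, i) ∈ A → (C j i).mulVec (x j - x i) = 0) ↔
        ∃ z : Fin n → ℝ, ∀ i, x i = z)
    (B : ℕ → Finset (Fin m × Fin m))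
    (hsub : ∀ t, B t ⊆ A)
    (hsymB : ∀ t, ∀ p ∈ B t, (p.2, p.1) ∈ B t)
    (hio : ∀ p ∈ A, ∀ T : ℕ, ∃ t, T ≤ t ∧ p ∈ B t)
    (x : ℕ → Fin m → (Fin n → ℝ))
    (hupd : ∀ t (i : Fin m), x (t + 1) i = x t i -
      (1 / 2 : ℝ) • ∑ j ∈ Finset.univ.filter (fun j : Fin m => (j, i) ∈ B t),
        (1 / (1 + (max (nbrCard (B t) i) (nbrCard (B t) j) : ℝ))) •
          ((C i j)ᵀ * C i j + (C j i)ᵀ * C j i).mulVec (x t i - x t j)) :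
    ∃ z : Fin n → ℝ, ∀ i : Fin m, Tendsto (fun t => x t i) atTop (nhds z) := by
  set F : Finset (Fin m × Fin m) → _ :=
    fun b => LinearMap.id - (1 / 2 : ℝ) • metropolisLaplacian C b
  set X : ℕ → PiLp 2 (fun _ : Fin m => EuclideanSpace ℝ (Fin n)) :=
    fun t => WithLp.toLp 2 fun i => WithLp.toLp 2 (x t i)
  have hX : ∀ t, X (t + 1) = F (B t) (X t) := fun t => by
    refine PiLp.ext fun i => ?_
    simp [X, F, hupd, metropolisLaplacian, metropolisWeight, nbrs, toLpLin_apply, add_mulVec,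
      smul_add]
  obtain ⟨Y, hlim, hfix⟩ := exists_tendsto_of_isParacontraction
    ((Set.finite_range F).subset (Set.range_comp_subset_range B F))
    (fun t => isParacontraction_metropolis (hsymB t) fun p hp => horth p (hsub t hp)) hX
  have hcons : ∀ j i, (j, i) ∈ A → C j i *ᵥ (WithLp.ofLp (Y j) - WithLp.ofLp (Y i)) = 0 := by
    intro j i hji
    obtain ⟨t, hYt, hjit⟩ := (hfix.and_frequently (frequently_atTop.2 (hio _ hji))).exists
    exact mulVec_sub_eq_zero_of_metropolisLaplacian_eq_zero (hsymB t) (by simpa [F] using hYt)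
      hjit
  obtain ⟨z, hz⟩ := (hwc fun i => WithLp.ofLp (Y i)).1 hcons
  refine ⟨z, fun i => ?_⟩
  have := ((PiLp.continuous_ofLp 2 _).comp (PiLp.continuous_apply 2 _ i)).tendsto Y
    |>.comp hlim
  simpa [X, hz, Function.comp_def] using this

/-- On a strongly connected symmetric directed graph `N` (arc set `A`, matrix
`C j i` with orthonormal rows on arc `(j,i)`) that is well-configured, if the time-varying
symmetric spanning subgraphs `B t ⊆ A` are such that every arc of `A` appears infinitely often,
then the Metropolis-weight algorithm
`x i (t+1) = x i t − (1/2) ∑_{j ∈ N_i(t)} w i j t • (C i jᵀ C i j + C j iᵀ C j i)(x i t − x j t)`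
with `w i j t = 1/(1 + max (dᵢ t) (dⱼ t))` drives all agents to a common limit. -/
theorem stmt_13 (m n : ℕ) (A : Finset (Fin m × Fin m))
    (hsym : ∀ p ∈ A, (p.2, p.1) ∈ A)
    (hsc : ∀ u v : Fin m, Relation.ReflTransGen (fun a b => (a, b) ∈ A) u v)
    (k : Fin m → Fin m → ℕ)
    (C : (j i : Fin m) → Matrix (Fin (k j i)) (Fin n) ℝ)
    (horth : ∀ p ∈ A, C p.1 p.2 * (C p.1 p.2)ᵀ = 1)
    (hwc : ∀ x : Fin m → (Fin n → ℝ),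
      (∀ j i : Fin m, (j, i) ∈ A → (C j i).mulVec (x j - x i) = 0) ↔
        ∃ z : Fin n → ℝ, ∀ i, x i = z)
    (B : ℕ → Finset (Fin m × Fin m))
    (hsub : ∀ t, B t ⊆ A)
    (hsymB : ∀ t, ∀ p ∈ B t, (p.2, p.1) ∈ B t)
    (hio : ∀ p ∈ A, ∀ T : ℕ, ∃ t, T ≤ t ∧ p ∈ B t)
    (x : ℕ → Fin m → (Fin n → ℝ))
    (hupd : ∀ t (i : Fin m), x (t + 1) i = x t i -
      (1 / 2 : ℝ) • ∑ j ∈ Finset.univ.filter (fun j : Fin m => (j, i) ∈ B t),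
        (1 / (1 + (max (nbrCard (B t) i) (nbrCard (B t) j) : ℝ))) •
          ((C i j)ᵀ * C i j + (C j i)ᵀ * C j i).mulVec (x t i - x t j)) :
    ∃ z : Fin n → ℝ, ∀ i : Fin m, Tendsto (fun t => x t i) atTop (nhds z) :=
  stmt_13_general m n A k C horth hwc B hsub hsymB hio x hupd
end

section
/- Let 1→2→⋯→m→1 be an m-vertex directed cycle (m ≥ 2) where each arc carries a real matrix C_i with n columns and full row rank, and let P_i = C_iᵀ(C_iC_iᵀ)^{−1}C_i be the orthogonal projection onto (kernel C_i)^⊥. If the agents update x_i(t+1) = x_i(t) − (1/2) P_i (x_i(t) − x_{i−1}(t)) for i ∈ {1,…,m} (indices mod m) with initial states satisfying x_i(0) ∈ image(P_i) for every i, then all m agents reach a consensus exponentially fast: there exist z ∈ ℝ^n, c ≥ 0 and ρ ∈ [0,1) such that ‖x_i(t) − z‖ ≤ c ρᵗ for all i and t. -/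
/-!
Because `P i` fixes `x t i` for all `t`, the update is `X ↦ (X + B X) / 2` with
`(B X) i = P i (X (i - 1))`, which is nonexpansive for the `ℓ²` norm on the stacked states. Hence
`T = (1 + B) / 2` is firmly nonexpansive: `‖T x‖² + ‖x - T x‖² ≤ ‖x‖²`. The residuals
`Tᵗ w - Tᵗ⁺¹ w` are then square-summable and nonincreasing in norm, so they are `O(t^{-1/2})`.
This forces `ker (1 - T) ⊓ range (1 - T) = ⊥`; as `1 - T` is then invertible on the
finite-dimensional `T`-invariant space `range (1 - T)`, a fixed power of `T` halves norms there.
Splitting `X 0 = f + u` along `ker (1 - T) ⊕ range (1 - T)` gives exponential convergence to the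
fixed point `f`. Finally, a fixed point of `B` is a consensus: norms cannot increase along the
cycle, so they are all equal, and equality in `‖P v‖ ≤ ‖v‖` forces `P v = v`.
-/

open Matrix WithLp

theorem exists_le_geometric_of_le_half {a : ℕ → ℝ} (ha : Antitone a) (ha0 : 0 ≤ a 0) {t₀ : ℕ}
    (ht₀ : 0 < t₀) (hhalf : ∀ t, a (t + t₀) ≤ a t / 2) :
    ∃ ρ : ℝ, 0 ≤ ρ ∧ ρ < 1 ∧ ∀ t, a t ≤ 2 * a 0 * ρ ^ t := by
  set ρ : ℝ := (2⁻¹ : ℝ) ^ (t₀⁻¹ : ℝ)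
  have hρ0 : 0 ≤ ρ := by positivity
  have hρ1 : ρ < 1 := Real.rpow_lt_one (by norm_num) (by norm_num) (by positivity)
  have hρt₀ : ρ ^ t₀ = 2⁻¹ := Real.rpow_inv_natCast_pow (by norm_num) ht₀.ne'
  have hblock : ∀ q, a (t₀ * q) ≤ a 0 * 2⁻¹ ^ q := by
    intro q
    induction q with
    | zero => simp
    | succ q ih =>
      rw [mul_add_one, pow_succ]
      linarith [hhalf (t₀ * q)]
  refine ⟨ρ, hρ0, hρ1, fun t => ?_⟩
  have hle : t ≤ t₀ * (t / t₀ + 1) := (Nat.lt_mul_div_succ t ht₀).le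
  calc a t ≤ a (t₀ * (t / t₀)) := ha (Nat.mul_div_le t t₀)
    _ ≤ a 0 * 2⁻¹ ^ (t / t₀) := hblock _
    _ = 2 * a 0 * ρ ^ (t₀ * (t / t₀ + 1)) := by
      rw [pow_mul, hρt₀, pow_succ]; ring
    _ ≤ 2 * a 0 * ρ ^ t :=
      mul_le_mul_of_nonneg_left (pow_le_pow_of_le_one hρ0 hρ1.le hle) (by positivity)

namespace LinearMap

variable {E : Type*} [NormedAddCommGroup E] [NormedSpace ℝ E]

def IsFirmlyNonexpansive (T : E →ₗ[ℝ] E) : Prop :=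
  ∀ x, ‖T x‖ ^ 2 + ‖x - T x‖ ^ 2 ≤ ‖x‖ ^ 2

theorem isFirmlyNonexpansive_half_smul_one_add {F : Type*} [NormedAddCommGroup F]
    [InnerProductSpace ℝ F] {B : F →ₗ[ℝ] F} (hB : ∀ x, ‖B x‖ ≤ ‖x‖) :
    ((2⁻¹ : ℝ) • (1 + B)).IsFirmlyNonexpansive := by
  intro x
  have happly : ((2⁻¹ : ℝ) • (1 + B)) x = (2⁻¹ : ℝ) • (x + B x) := rfl
  have hsub : x - (2⁻¹ : ℝ) • (x + B x) = (2⁻¹ : ℝ) • (x - B x) := by module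
  rw [happly, hsub, norm_smul, norm_smul, mul_pow, mul_pow]
  have := parallelogram_law_with_norm ℝ x (B x)
  have := pow_le_pow_left₀ (norm_nonneg _) (hB x) 2
  norm_num
  linarith

theorem half_smul_one_add_apply_eq_self_iff {M : Type*} [AddCommGroup M] [Module ℝ M]
    {B : Module.End ℝ M} {x : M} : ((2⁻¹ : ℝ) • (1 + B)) x = x ↔ B x = x := by
  change (2⁻¹ : ℝ) • (x + B x) = x ↔ B x = x
  rw [inv_smul_eq_iff₀ two_ne_zero, two_smul, add_right_inj]

variable {T : E →ₗ[ℝ] E}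

theorem iterate_apply_sub_apply (t : ℕ) (w : E) : T^[t] (w - T w) = T^[t] w - T (T^[t] w) := by
  rw [iterate_map_sub, ← Function.iterate_succ_apply, Function.iterate_succ_apply']

theorem apply_mem_range_one_sub {u : E} (hu : u ∈ range (1 - T)) : T u ∈ range (1 - T) := by
  obtain ⟨w, rfl⟩ := hu
  exact ⟨T w, by simp only [sub_apply, Module.End.one_apply, map_sub]⟩

namespace IsFirmlyNonexpansive

variable (hT : T.IsFirmlyNonexpansive)
include hT

theorem norm_apply_le (x : E) : ‖T x‖ ≤ ‖x‖ :=
  (pow_le_pow_iff_left₀ (norm_nonneg _) (norm_nonneg _) two_ne_zero).mp <| by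
    nlinarith [hT x, sq_nonneg ‖x - T x‖]

theorem sq_norm_iterate_add_sum_le (w : E) (s : ℕ) :
    ‖T^[s] w‖ ^ 2 + ∑ j ∈ Finset.range s, ‖T^[j] (w - T w)‖ ^ 2 ≤ ‖w‖ ^ 2 := by
  induction s with
  | zero => simp
  | succ s ih =>
    rw [Finset.sum_range_succ, Function.iterate_succ_apply', iterate_apply_sub_apply]
    linarith [hT (T^[s] w)]

theorem succ_mul_sq_norm_iterate_sub_le (w : E) (t : ℕ) :
    (t + 1) * ‖T^[t] (w - T w)‖ ^ 2 ≤ ‖w‖ ^ 2 := by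
  have hanti : Antitone fun j => ‖T^[j] (w - T w)‖ := antitone_nat_of_succ_le fun j => by
    rw [Function.iterate_succ_apply']
    exact hT.norm_apply_le _
  calc (t + 1) * ‖T^[t] (w - T w)‖ ^ 2 = ∑ _j ∈ Finset.range (t + 1), ‖T^[t] (w - T w)‖ ^ 2 := by
        simp
    _ ≤ ∑ j ∈ Finset.range (t + 1), ‖T^[j] (w - T w)‖ ^ 2 := Finset.sum_le_sum fun j hj =>
        pow_le_pow_left₀ (norm_nonneg _) (hanti (Nat.lt_succ_iff.mp (Finset.mem_range.mp hj))) 2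
    _ ≤ ‖w‖ ^ 2 := by linarith [sq_norm_iterate_add_sum_le hT w (t + 1), sq_nonneg ‖T^[t + 1] w‖]

theorem eq_zero_of_apply_eq_self_of_eq_sub {f w : E} (hf : T f = f) (hw : f = w - T w) :
    f = 0 := by
  by_contra hne
  have hpos : 0 < ‖f‖ ^ 2 := by positivity
  obtain ⟨t, ht⟩ := exists_nat_gt (‖w‖ ^ 2 / ‖f‖ ^ 2)
  have hdecay := hT.succ_mul_sq_norm_iterate_sub_le w t
  rw [← hw, Function.iterate_fixed hf] at hdecay
  rw [div_lt_iff₀ hpos] at ht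
  nlinarith

theorem disjoint_ker_range : Disjoint (ker (1 - T)) (range (1 - T)) := by
  rw [Submodule.disjoint_def]
  rintro f hf ⟨w, rfl⟩
  simp only [mem_ker, sub_apply, Module.End.one_apply, sub_eq_zero] at hf
  exact hT.eq_zero_of_apply_eq_self_of_eq_sub hf.symm rfl

theorem isCompl_ker_range [FiniteDimensional ℝ E] : IsCompl (ker (1 - T)) (range (1 - T)) :=
  (Submodule.isCompl_iff_disjoint _ _
    (by rw [add_comm, finrank_range_add_finrank_ker])).mpr hT.disjoint_ker_range

variable [FiniteDimensional ℝ E]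

theorem exists_preimage_norm_le :
    ∃ K : ℝ, ∀ u ∈ range (1 - T), ∃ w, w - T w = u ∧ ‖w‖ ≤ K * ‖u‖ := by
  set R := range (1 - T)
  set S : R →ₗ[ℝ] R := (1 - T).restrict fun _ _ => mem_range_self _ _
  have hS : Function.Injective S := by
    rw [← ker_eq_bot, Submodule.eq_bot_iff]
    intro r hr
    have hr' : (r : E) ∈ ker (1 - T) := by simpa [S, Subtype.ext_iff] using hr
    exact Subtype.ext (Submodule.disjoint_def.mp hT.disjoint_ker_range _ hr' r.2)
  obtain ⟨K, -, hK⟩ := S.injective_iff_antilipschitz.mp hS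
  refine ⟨K, fun u hu => ?_⟩
  obtain ⟨r, hr⟩ := S.injective_iff_surjective.mp hS ⟨u, hu⟩
  have hSr : (r : E) - T r = u := congrArg Subtype.val hr
  refine ⟨r, hSr, ?_⟩
  calc ‖(r : E)‖ = ‖r‖ := rfl
    _ ≤ K * ‖S r‖ := ZeroHomClass.bound_of_antilipschitz S hK r
    _ = K * ‖u‖ := by rw [hr]; rfl

theorem exists_norm_iterate_le_half :
    ∃ t₀ : ℕ, 0 < t₀ ∧ ∀ u ∈ range (1 - T), ‖T^[t₀] u‖ ≤ ‖u‖ / 2 := by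
  obtain ⟨K, hK⟩ := hT.exists_preimage_norm_le
  refine ⟨⌈4 * K ^ 2⌉₊ + 1, Nat.succ_pos _, fun u hu => ?_⟩
  obtain ⟨w, rfl, hw⟩ := hK u hu
  have hdecay := hT.succ_mul_sq_norm_iterate_sub_le w (⌈4 * K ^ 2⌉₊ + 1)
  have hceil := Nat.le_ceil (4 * K ^ 2)
  push_cast at hdecay
  refine (pow_le_pow_iff_left₀ (norm_nonneg _) (by positivity) two_ne_zero).mp ?_
  nlinarith [pow_le_pow_left₀ (norm_nonneg _) hw 2, sq_nonneg ‖T^[⌈4 * K ^ 2⌉₊ + 1] (w - T w)‖,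
    sq_nonneg ‖w - T w‖]

theorem exists_apply_eq_self_norm_iterate_sub_le (x : E) :
    ∃ f, T f = f ∧ ∃ c ρ : ℝ, 0 ≤ c ∧ 0 ≤ ρ ∧ ρ < 1 ∧ ∀ t, ‖T^[t] x - f‖ ≤ c * ρ ^ t := by
  obtain ⟨f, hf, u, hu, rfl⟩ :=
    Submodule.mem_sup.mp (hT.isCompl_ker_range.sup_eq_top ▸ Submodule.mem_top (x := x))
  simp only [mem_ker, sub_apply, Module.End.one_apply, sub_eq_zero] at hf
  have hTf : T f = f := hf.symm
  have hmaps : ∀ t, T^[t] u ∈ range (1 - T) := fun t =>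
    Set.MapsTo.iterate (fun _ => apply_mem_range_one_sub) t hu
  obtain ⟨t₀, ht₀, hhalf⟩ := hT.exists_norm_iterate_le_half
  obtain ⟨ρ, hρ0, hρ1, hρ⟩ := exists_le_geometric_of_le_half (a := fun t => ‖T^[t] u‖)
    (antitone_nat_of_succ_le fun t => by
      simpa only [Function.iterate_succ_apply'] using hT.norm_apply_le _)
    (norm_nonneg _) ht₀ (fun t => by
      rw [add_comm, Function.iterate_add_apply]
      exact hhalf _ (hmaps t))
  refine ⟨f, hTf, 2 * ‖u‖, ρ, by positivity, hρ0, hρ1, fun t => ?_⟩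
  rw [iterate_map_add, Function.iterate_fixed hTf, add_sub_cancel_left]
  exact hρ t

end IsFirmlyNonexpansive
end LinearMap

namespace IsStarProjection

variable {𝕜 F : Type*} [RCLike 𝕜] [NormedAddCommGroup F] [InnerProductSpace 𝕜 F] [CompleteSpace F]
  {p : F →L[𝕜] F}

theorem norm_apply_le (hp : IsStarProjection p) (v : F) : ‖p v‖ ≤ ‖v‖ := by
  obtain ⟨K, _, rfl⟩ := isStarProjection_iff_eq_starProjection.mp hp
  exact K.norm_starProjection_apply_le v

theorem apply_eq_self_of_norm_apply_eq (hp : IsStarProjection p) {v : F} (h : ‖p v‖ = ‖v‖) :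
    p v = v := by
  obtain ⟨K, _, rfl⟩ := isStarProjection_iff_eq_starProjection.mp hp
  exact K.starProjection_eq_self_iff.mpr ((K.mem_iff_norm_starProjection v).mpr h)

end IsStarProjection

namespace Matrix

variable {ι κ K : Type*} [Fintype ι] [DecidableEq ι] [Fintype κ]

theorem isUnit_of_rank_eq_card [Field K] {A : Matrix ι ι K} (h : A.rank = Fintype.card ι) :
    IsUnit A := by
  refine mulVec_surjective_iff_isUnit.mp <| (LinearMap.range_eq_top (f := A.mulVecLin)).mp ?_
  apply Submodule.eq_top_of_finrank_eq
  rw [← Matrix.rank, h, Module.finrank_fintype_fun_eq_card]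

theorem isStarProjection_transpose_mul_inv_mul {C : Matrix ι κ ℝ}
    (h : C.rank = Fintype.card ι) : IsStarProjection (Cᵀ * (C * Cᵀ)⁻¹ * C) := by
  have hunit : IsUnit (C * Cᵀ).det :=
    (isUnit_iff_isUnit_det _).mp (isUnit_of_rank_eq_card (by rw [rank_self_mul_transpose, h]))
  refine ⟨?_, ?_⟩
  · calc Cᵀ * (C * Cᵀ)⁻¹ * C * (Cᵀ * (C * Cᵀ)⁻¹ * C)
        = Cᵀ * (C * Cᵀ)⁻¹ * ((C * Cᵀ) * (C * Cᵀ)⁻¹) * C := by simp only [Matrix.mul_assoc]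
      _ = Cᵀ * (C * Cᵀ)⁻¹ * C := by rw [mul_nonsing_inv _ hunit, Matrix.mul_one]
  · rw [IsSelfAdjoint, star_eq_conjTranspose, conjTranspose_eq_transpose_of_trivial,
      transpose_mul, transpose_mul, transpose_transpose, transpose_nonsing_inv, transpose_mul,
      transpose_transpose, Matrix.mul_assoc]

end Matrix

theorem Fin.eq_apply_zero_of_forall_apply_sub_one {m : ℕ} [NeZero m] {α : Type*} {g : Fin m → α}
    (hg : ∀ i, g i = g (i - 1)) (i : Fin m) : g i = g 0 := by
  open Fin.NatCast in
  have hnat : ∀ j : ℕ, g j = g 0 := by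
    intro j
    induction j with
    | zero => rw [Nat.cast_zero]
    | succ j ih => rw [hg, Nat.cast_succ, add_sub_cancel_right, ih]
  simpa only [Fin.cast_val_eq_self] using hnat i

section CycleShift

variable {F : Type*} [NormedAddCommGroup F] [InnerProductSpace ℝ F] {m : ℕ} [NeZero m]

def cycleShift (p : Fin m → F →L[ℝ] F) :
    PiLp 2 (fun _ : Fin m => F) →ₗ[ℝ] PiLp 2 (fun _ : Fin m => F) where
  toFun x := toLp 2 fun i => p i (x (i - 1))
  map_add' x y := by ext i; simp
  map_smul' c x := by ext i; simp

theorem norm_cycleShift_le {p : Fin m → F →L[ℝ] F} (hp : ∀ i v, ‖p i v‖ ≤ ‖v‖)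
    (x : PiLp 2 (fun _ : Fin m => F)) : ‖cycleShift p x‖ ≤ ‖x‖ := by
  refine (pow_le_pow_iff_left₀ (norm_nonneg _) (norm_nonneg _) two_ne_zero).mp ?_
  rw [PiLp.norm_sq_eq_of_L2, PiLp.norm_sq_eq_of_L2]
  calc ∑ i, ‖cycleShift p x i‖ ^ 2 ≤ ∑ i, ‖x (i - 1)‖ ^ 2 :=
        Finset.sum_le_sum fun i _ => pow_le_pow_left₀ (norm_nonneg _) (hp _ _) 2
    _ = ∑ i, ‖x i‖ ^ 2 := (Equiv.subRight 1).sum_comp fun i => ‖x i‖ ^ 2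

theorem apply_eq_apply_zero_of_cycleShift_eq_self [CompleteSpace F] {p : Fin m → F →L[ℝ] F}
    (hp : ∀ i, IsStarProjection (p i))
    {x : PiLp 2 (fun _ : Fin m => F)} (hx : cycleShift p x = x) (i : Fin m) : x i = x 0 := by
  have hcomp (i : Fin m) : p i (x (i - 1)) = x i := congrArg (· i) hx
  have hle (i : Fin m) : ‖x i‖ ≤ ‖x (i - 1)‖ := hcomp i ▸ (hp i).norm_apply_le _
  have hsum : ∑ i, ‖x i‖ = ∑ i, ‖x (i - 1)‖ :=
    ((Equiv.subRight 1).sum_comp fun i => ‖x i‖).symm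
  have heq (i : Fin m) : ‖x i‖ = ‖x (i - 1)‖ :=
    (Finset.sum_eq_sum_iff_of_le fun i _ => hle i).mp hsum i (Finset.mem_univ i)
  refine Fin.eq_apply_zero_of_forall_apply_sub_one (fun i => ?_) i
  rw [← hcomp i, (hp i).apply_eq_self_of_norm_apply_eq (hcomp i ▸ heq i)]

end CycleShift

section Trajectory

variable {m n : ℕ} [NeZero m] {P : Fin m → Matrix (Fin n) (Fin n) ℝ}
  {x : ℕ → Fin m → Fin n → ℝ}

theorem mulVec_trajectory_eq_self (hP : ∀ i, IsIdempotentElem (P i))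
    (hinit : ∀ i, x 0 i ∈ LinearMap.range (P i).mulVecLin)
    (hupd : ∀ t i, x (t + 1) i = x t i - (1 / 2 : ℝ) • (P i *ᵥ (x t i - x t (i - 1))))
    (t : ℕ) (i : Fin m) : P i *ᵥ x t i = x t i := by
  induction t generalizing i with
  | zero =>
    obtain ⟨v, hv⟩ := hinit i
    rw [← hv, Matrix.mulVecLin_apply, mulVec_mulVec, (hP i).eq]
  | succ t ih =>
    simp only [hupd, mulVec_sub, mulVec_smul, mulVec_mulVec, (hP i).eq, ih]

theorem toLp_trajectory_eq_iterate (hP : ∀ i, IsIdempotentElem (P i))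
    (hinit : ∀ i, x 0 i ∈ LinearMap.range (P i).mulVecLin)
    (hupd : ∀ t i, x (t + 1) i = x t i - (1 / 2 : ℝ) • (P i *ᵥ (x t i - x t (i - 1))))
    (t : ℕ) :
    toLp 2 (fun i => toLp 2 (x t i)) =
      (⇑((2⁻¹ : ℝ) • (1 + cycleShift fun i => toEuclideanCLM (𝕜 := ℝ) (P i))))^[t]
        (toLp 2 fun i => toLp 2 (x 0 i)) := by
  induction t with
  | zero => rfl
  | succ t ih =>
    rw [Function.iterate_succ_apply', ← ih]
    ext i : 1
    have hfix := mulVec_trajectory_eq_self hP hinit hupd t i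
    change toLp 2 (x (t + 1) i) = (2⁻¹ : ℝ) • (toLp 2 (x t i) + toLp 2 (P i *ᵥ x t (i - 1)))
    rw [hupd, mulVec_sub, hfix, ← WithLp.toLp_add, ← WithLp.toLp_smul]
    congr 1
    module

end Trajectory

theorem stmt_14_general (m n : ℕ) [NeZero m] (k : Fin m → ℕ)
    (C : (i : Fin m) → Matrix (Fin (k i)) (Fin n) ℝ)
    (hrank : ∀ i, (C i).rank = k i)
    (x : ℕ → Fin m → (Fin n → ℝ))
    (hinit : ∀ i : Fin m,
      x 0 i ∈ LinearMap.range ((C i)ᵀ * (C i * (C i)ᵀ)⁻¹ * C i).mulVecLin)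
    (hupd : ∀ t (i : Fin m), x (t + 1) i = x t i -
      (1 / 2 : ℝ) • ((C i)ᵀ * (C i * (C i)ᵀ)⁻¹ * C i).mulVec (x t i - x t (i - 1))) :
    ∃ (z : Fin n → ℝ) (c ρ : ℝ), 0 ≤ c ∧ 0 ≤ ρ ∧ ρ < 1 ∧
      ∀ (i : Fin m) (t : ℕ), ‖x t i - z‖ ≤ c * ρ ^ t := by
  have hP (i : Fin m) : IsStarProjection ((C i)ᵀ * (C i * (C i)ᵀ)⁻¹ * C i) :=
    isStarProjection_transpose_mul_inv_mul (by simpa using hrank i)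
  set p := fun i => toEuclideanCLM (𝕜 := ℝ) ((C i)ᵀ * (C i * (C i)ᵀ)⁻¹ * C i)
  have hp (i : Fin m) : IsStarProjection (p i) := (hP i).map _
  have hX := toLp_trajectory_eq_iterate (fun i => (hP i).isIdempotentElem) hinit hupd
  have hT := LinearMap.isFirmlyNonexpansive_half_smul_one_add
    (norm_cycleShift_le fun i => (hp i).norm_apply_le)
  obtain ⟨f, hf, c, ρ, hc, hρ0, hρ1, hconv⟩ :=
    hT.exists_apply_eq_self_norm_iterate_sub_le (toLp 2 fun i => toLp 2 (x 0 i))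
  have hcons := apply_eq_apply_zero_of_cycleShift_eq_self hp
    (LinearMap.half_smul_one_add_apply_eq_self_iff.mp hf)
  refine ⟨ofLp (f 0), c, ρ, hc, hρ0, hρ1, fun i t => ?_⟩
  calc ‖x t i - ofLp (f 0)‖ ≤ ‖toLp 2 (x t i - ofLp (f 0))‖ :=
        (pi_norm_le_iff_of_nonneg (norm_nonneg _)).mpr fun j => PiLp.norm_apply_le (toLp 2 _) j
    _ = ‖(toLp 2 (fun i => toLp 2 (x t i)) - f) i‖ := by rw [← hcons i]; rfl
    _ ≤ ‖toLp 2 (fun i => toLp 2 (x t i)) - f‖ := PiLp.norm_apply_le _ i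
    _ ≤ c * ρ ^ t := hX t ▸ hconv t

/-- On the directed cycle `0 → 1 → ⋯ → m-1 → 0` (`m ≥ 2`, matrix `C i` with full
row rank on the arc `(i-1, i)`, indices mod `m`), the update
`x i (t+1) = x i t − (1/2) P i (x i t − x (i-1) t)`, with `Pᵢ = Cᵢᵀ(CᵢCᵢᵀ)⁻¹Cᵢ` and initial
states `x i 0 ∈ image (P i)`, reaches a consensus exponentially fast. -/
theorem stmt_14 (m n : ℕ) [NeZero m] (hm : 2 ≤ m) (k : Fin m → ℕ)
    (C : (i : Fin m) → Matrix (Fin (k i)) (Fin n) ℝ)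
    (hrank : ∀ i, (C i).rank = k i)
    (x : ℕ → Fin m → (Fin n → ℝ))
    (hinit : ∀ i : Fin m,
      x 0 i ∈ LinearMap.range ((C i)ᵀ * (C i * (C i)ᵀ)⁻¹ * C i).mulVecLin)
    (hupd : ∀ t (i : Fin m), x (t + 1) i = x t i -
      (1 / 2 : ℝ) • ((C i)ᵀ * (C i * (C i)ᵀ)⁻¹ * C i).mulVec (x t i - x t (i - 1))) :
    ∃ (z : Fin n → ℝ) (c ρ : ℝ), 0 ≤ c ∧ 0 ≤ ρ ∧ ρ < 1 ∧
      ∀ (i : Fin m) (t : ℕ), ‖x t i - z‖ ≤ c * ρ ^ t :=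
  stmt_14_general m n k C hrank x hinit hupd
end

section
/- Let C_1, C_2, C_3, C_4 be real matrices with n columns and nonzero kernels K_1, K_2, K_3, K_4, associated to the arcs (1,2), (2,3), (3,1), (2,1) of a 3-vertex strongly connected directed graph. Then the relations C_1(x_2 − x_1) = 0, C_2(x_3 − x_2) = 0, C_3(x_1 − x_3) = 0 and C_4(x_1 − x_2) = 0 imply x_1 = x_2 = x_3 for all x_1, x_2, x_3 ∈ ℝ^n, if and only if {K_1 ∩ K_4, K_2, K_3} is an independent family of subspaces of ℝ^n, i.e., K_1 ∩ K_4 ∩ (K_2 + K_3) = {0}, K_2 ∩ (K_1 ∩ K_4 + K_3) = {0}, and K_3 ∩ (K_1 ∩ K_4 + K_2) = {0}. -/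
/-- Independence of three subspaces is equivalent to the "zero-sum" property. -/
lemma indep_aux {M : Type*} [AddCommGroup M] [Module ℝ M] (A B C : Submodule ℝ M) :
    (∀ a ∈ A, ∀ b ∈ B, ∀ c ∈ C, a + b + c = 0 → a = 0 ∧ b = 0) ↔
      (A ⊓ (B ⊔ C) = ⊥ ∧ B ⊓ (A ⊔ C) = ⊥ ∧ C ⊓ (A ⊔ B) = ⊥) := by
  constructor
  · intro h
    refine ⟨?_, ?_, ?_⟩
    · rw [Submodule.eq_bot_iff]
      rintro v ⟨hvA, hvBC⟩
      obtain ⟨b, hb, c, hc, hbc⟩ := Submodule.mem_sup.mp hvBC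
      exact (h v hvA (-b) (neg_mem hb) (-c) (neg_mem hc) (by rw [← hbc]; abel)).1
    · rw [Submodule.eq_bot_iff]
      rintro v ⟨hvB, hvAC⟩
      obtain ⟨a, ha, c, hc, hac⟩ := Submodule.mem_sup.mp hvAC
      have := (h a ha (-v) (neg_mem hvB) c hc (by rw [← hac] at *; abel)).2
      simpa using this
    · rw [Submodule.eq_bot_iff]
      rintro v ⟨hvC, hvAB⟩
      obtain ⟨a, ha, b, hb, hab⟩ := Submodule.mem_sup.mp hvAB
      obtain ⟨ha0, hb0⟩ := h a ha b hb (-v) (neg_mem hvC) (by rw [← hab]; abel)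
      rw [← hab, ha0, hb0, add_zero]
  · rintro ⟨h1, h2, h3⟩ a ha b hb c hc habc
    have ha0 : a = 0 := by
      have : a ∈ A ⊓ (B ⊔ C) := by
        refine ⟨ha, Submodule.mem_sup.mpr ⟨-b, neg_mem hb, -c, neg_mem hc, ?_⟩⟩
        rw [← neg_add, neg_eq_iff_add_eq_zero]
        rw [← habc]; abel
      rw [h1] at this; simpa using this
    have hb0 : b = 0 := by
      have : b ∈ B ⊓ (A ⊔ C) := by
        refine ⟨hb, Submodule.mem_sup.mpr ⟨-a, neg_mem ha, -c, neg_mem hc, ?_⟩⟩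
        rw [← neg_add, neg_eq_iff_add_eq_zero]
        rw [← habc]; abel
      rw [h2] at this; simpa using this
    exact ⟨ha0, hb0⟩

/-- For the 3-vertex strongly connected graph with arcs
`(1,2), (2,3), (3,1), (2,1)` carrying matrices `C₁, C₂, C₃, C₄` with nonzero kernels
`K₁, K₂, K₃, K₄`, local agreement implies consensus iff `{K₁ ∩ K₄, K₂, K₃}` is an
independent family. -/
theorem stmt_19 (n : ℕ) (k1 k2 k3 k4 : ℕ)
    (C1 : Matrix (Fin k1) (Fin n) ℝ) (C2 : Matrix (Fin k2) (Fin n) ℝ)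
    (C3 : Matrix (Fin k3) (Fin n) ℝ) (C4 : Matrix (Fin k4) (Fin n) ℝ)
    (hK1 : LinearMap.ker C1.mulVecLin ≠ ⊥) (hK2 : LinearMap.ker C2.mulVecLin ≠ ⊥)
    (hK3 : LinearMap.ker C3.mulVecLin ≠ ⊥) (hK4 : LinearMap.ker C4.mulVecLin ≠ ⊥) :
    (∀ x1 x2 x3 : Fin n → ℝ,
        C1.mulVec (x2 - x1) = 0 → C2.mulVec (x3 - x2) = 0 →
        C3.mulVec (x1 - x3) = 0 → C4.mulVec (x1 - x2) = 0 →
        x1 = x2 ∧ x2 = x3)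
      ↔ (LinearMap.ker C1.mulVecLin ⊓ LinearMap.ker C4.mulVecLin
            ⊓ (LinearMap.ker C2.mulVecLin ⊔ LinearMap.ker C3.mulVecLin) = ⊥ ∧
         LinearMap.ker C2.mulVecLin
            ⊓ (LinearMap.ker C1.mulVecLin ⊓ LinearMap.ker C4.mulVecLin
                ⊔ LinearMap.ker C3.mulVecLin) = ⊥ ∧
         LinearMap.ker C3.mulVecLin
            ⊓ (LinearMap.ker C1.mulVecLin ⊓ LinearMap.ker C4.mulVecLin
                ⊔ LinearMap.ker C2.mulVecLin) = ⊥) := by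
  rw [← indep_aux]
  constructor
  · intro h a ha b hb c hc habc
    have ha1 : C1.mulVec (a - 0) = 0 := by
      simpa using (LinearMap.mem_ker.mp ha.1)
    have hb2 : C2.mulVec ((a + b) - a) = 0 := by
      simpa using (LinearMap.mem_ker.mp hb)
    have hc3 : C3.mulVec (0 - (a + b)) = 0 := by
      have : (0 : Fin n → ℝ) - (a + b) = c := by
        have := habc; funext i
        have h' := congrFun habc i
        simp only [Pi.add_apply, Pi.zero_apply] at h' ⊢
        simp [Pi.sub_apply, Pi.add_apply]
        linarith [h']
      rw [this]
      simpa using (LinearMap.mem_ker.mp hc)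
    have ha4 : C4.mulVec (0 - a) = 0 := by
      have : (0 : Fin n → ℝ) - a = -a := by simp
      rw [this]
      have : C4.mulVecLin (-a) = 0 := by
        rw [map_neg, LinearMap.mem_ker.mp ha.2, neg_zero]
      simpa using this
    obtain ⟨e1, e2⟩ := h 0 a (a + b) ha1 hb2 hc3 ha4
    constructor
    · exact e1.symm
    · have : a + b = a := e2.symm
      simpa using this
  · intro h x1 x2 x3 h1 h2 h3 h4
    have ha : (x2 - x1) ∈ LinearMap.ker C1.mulVecLin ⊓ LinearMap.ker C4.mulVecLin := by
      constructor
      · exact LinearMap.mem_ker.mpr (by simpa using h1)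
      · have : C4.mulVecLin (-(x1 - x2)) = 0 := by
          rw [map_neg]
          simp only [Matrix.mulVecLin_apply]
          rw [h4, neg_zero]
        simpa [neg_sub] using this
    have hb : (x3 - x2) ∈ LinearMap.ker C2.mulVecLin := LinearMap.mem_ker.mpr (by simpa using h2)
    have hc : (x1 - x3) ∈ LinearMap.ker C3.mulVecLin := LinearMap.mem_ker.mpr (by simpa using h3)
    obtain ⟨e1, e2⟩ := h (x2 - x1) ha (x3 - x2) hb (x1 - x3) hc (by abel)
    exact ⟨(sub_eq_zero.mp e1).symm, (sub_eq_zero.mp e2).symm⟩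
end
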